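/- arXiv:math/0703899 — 2 statements merged into one kernel-verified Lean document; each statement's English description precedes it below -/
import Mathlib

section
/- Adjacent pairs suffice: Let G be a network. If even_res(p,q) = odd_res(p,q) for every pair of adjacent vertices p, q of G, then even_res(p,q) = odd_res(p,q) for every pair of vertices p ≠ q of G. -/
open scoped ENNReal
open Filter

variable {V : Type*}

/-- A *flow* on a graph: an antisymmetric function on ordered pairs of vertices
that vanishes on non-adjacent pairs. -/
def IsFlow (G : SimpleGraph V) (θ : V → V → ℝ) : Prop :=
  (∀ u v, θ u v = -θ v u) ∧ ∀ u v, ¬G.Adj u v → θ u v = 0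

/-- The divergence (source strength) of a flow at a vertex. -/
noncomputable def divg (G : SimpleGraph V) [G.LocallyFinite] (θ : V → V → ℝ) (v : V) : ℝ :=
  ∑ u ∈ G.neighborFinset v, θ v u

/-- The energy `(1/2) ∑ r(u,v) θ(u,v)²` dissipated by a flow, valued in `[0,∞]`. -/
noncomputable def energy (r θ : V → V → ℝ) : ℝ≥0∞ :=
  2⁻¹ * ∑' p : V × V, ENNReal.ofReal (r p.1 p.2 * θ p.1 p.2 ^ 2)

open Classical in
/-- The source distribution with a unit source at `p` and a unit sink at `q`. -/
noncomputable def pointSource (p q v : V) : ℝ :=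
  if v = p then 1 else if v = q then -1 else 0

/-- The odd resistance: the infimum of the energy over all finite-energy unit
flows from `p` to `q`. -/
noncomputable def oddRes (G : SimpleGraph V) [G.LocallyFinite] (r : V → V → ℝ)
    (p q : V) : ℝ≥0∞ :=
  ⨅ (θ : V → V → ℝ) (_ : IsFlow G θ ∧ energy r θ ≠ ⊤ ∧ divg G θ = pointSource p q),
    energy r θ

/-- The cut resistance: the infimum of the energy over all unit flows from `p` to `q`
vanishing on every edge with an endpoint outside `S`. -/
noncomputable def cutRes (G : SimpleGraph V) [G.LocallyFinite] (r : V → V → ℝ)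
    (p q : V) (S : Finset V) : ℝ≥0∞ :=
  ⨅ (θ : V → V → ℝ) (_ : IsFlow G θ ∧ divg G θ = pointSource p q ∧
      ∀ u v, (u ∉ S ∨ v ∉ S) → θ u v = 0), energy r θ

/-- The even resistance: the infimum of the cut resistances over all finite
vertex sets containing `p` and `q`. -/
noncomputable def evenRes (G : SimpleGraph V) [G.LocallyFinite] (r : V → V → ℝ)
    (p q : V) : ℝ≥0∞ :=
  ⨅ (S : Finset V) (_ : p ∈ S ∧ q ∈ S), cutRes G r p q S

/-- The short resistance: the infimum of the energy over all antisymmetric edge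
functions supported on edges with at least one endpoint in `S` whose divergence
at every vertex of `S` is that of a unit flow from `p` to `q`. -/
noncomputable def shortRes (G : SimpleGraph V) [G.LocallyFinite] (r : V → V → ℝ)
    (p q : V) (S : Finset V) : ℝ≥0∞ :=
  ⨅ (θ : V → V → ℝ) (_ : (∀ u v, θ u v = -θ v u) ∧ (∀ u v, ¬G.Adj u v → θ u v = 0) ∧
      (∀ u v, u ∉ S → v ∉ S → θ u v = 0) ∧
      ∀ v ∈ S, divg G θ v = pointSource p q v), energy r θ

/-- A function on the vertices of a network is harmonic if the net current it
induces out of each vertex is zero. -/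
def Harmonic (G : SimpleGraph V) [G.LocallyFinite] (r : V → V → ℝ) (u : V → ℝ) : Prop :=
  ∀ v, ∑ w ∈ G.neighborFinset v, (u v - u w) / r v w = 0

open Classical in
/-- The Dirichlet energy `(1/2) ∑ (u(v)-u(w))²/r(v,w)` of a function on the vertices. -/
noncomputable def fnEnergy (G : SimpleGraph V) (r : V → V → ℝ) (u : V → ℝ) : ℝ≥0∞ :=
  2⁻¹ * ∑' p : V × V,
    if G.Adj p.1 p.2 then ENNReal.ofReal ((u p.1 - u p.2) ^ 2 / r p.1 p.2) else 0


namespace APS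


/-- inner product of two edge functions over a finite pair set -/
noncomputable def ipr (r : V → V → ℝ) (P : Finset (V × V)) (θ φ : V → V → ℝ) : ℝ :=
  2⁻¹ * ∑ p ∈ P, r p.1 p.2 * (θ p.1 p.2 * φ p.1 p.2)

noncomputable def er (r : V → V → ℝ) (P : Finset (V × V)) (θ : V → V → ℝ) : ℝ :=
  ipr r P θ θ

lemma ipr_comm (r : V → V → ℝ) (P : Finset (V × V)) (θ φ : V → V → ℝ) :
    ipr r P θ φ = ipr r P φ θ := by
  unfold ipr; congr 1; apply Finset.sum_congr rfl; intros; ring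

lemma er_expand (r : V → V → ℝ) (P : Finset (V × V)) (θ σ : V → V → ℝ) (t : ℝ) :
    er r P (fun u v => θ u v + t * σ u v)
      = er r P θ + 2 * t * ipr r P θ σ + t ^ 2 * er r P σ := by
  unfold er ipr
  have h : ∀ p ∈ P,
      r p.1 p.2 * ((θ p.1 p.2 + t * σ p.1 p.2) * (θ p.1 p.2 + t * σ p.1 p.2))
        = r p.1 p.2 * (θ p.1 p.2 * θ p.1 p.2)
          + (2 * t) * (r p.1 p.2 * (θ p.1 p.2 * σ p.1 p.2))
          + t ^ 2 * (r p.1 p.2 * (σ p.1 p.2 * σ p.1 p.2)) := by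
    intros; ring
  rw [Finset.sum_congr rfl h, Finset.sum_add_distrib, Finset.sum_add_distrib,
    ← Finset.mul_sum, ← Finset.mul_sum]
  ring

lemma er_nonneg (r : V → V → ℝ) (P : Finset (V × V)) (hP : ∀ p ∈ P, 0 ≤ r p.1 p.2)
    (θ : V → V → ℝ) : 0 ≤ er r P θ := by
  unfold er ipr
  have : (0:ℝ) ≤ ∑ p ∈ P, r p.1 p.2 * (θ p.1 p.2 * θ p.1 p.2) := by
    apply Finset.sum_nonneg
    intro p hp
    have := hP p hp
    nlinarith [mul_self_nonneg (θ p.1 p.2)]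
  linarith

lemma ipr_le_sqrt (r : V → V → ℝ) (P : Finset (V × V)) (hP : ∀ p ∈ P, 0 ≤ r p.1 p.2)
    (θ φ : V → V → ℝ) :
    ipr r P θ φ ≤ Real.sqrt (er r P θ) * Real.sqrt (er r P φ) := by
  classical
  set f : V × V → ℝ := fun p => Real.sqrt (2⁻¹ * r p.1 p.2) * θ p.1 p.2 with hf
  set g : V × V → ℝ := fun p => Real.sqrt (2⁻¹ * r p.1 p.2) * φ p.1 p.2 with hg
  have hfg : ∀ (ψ χ : V → V → ℝ), ipr r P ψ χ
      = ∑ p ∈ P, (Real.sqrt (2⁻¹ * r p.1 p.2) * ψ p.1 p.2)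
        * (Real.sqrt (2⁻¹ * r p.1 p.2) * χ p.1 p.2) := by
    intro ψ χ
    unfold ipr
    rw [Finset.mul_sum]
    apply Finset.sum_congr rfl
    intro p hp
    have h0 : (0:ℝ) ≤ 2⁻¹ * r p.1 p.2 := by have := hP p hp; positivity
    have hss : Real.sqrt (2⁻¹ * r p.1 p.2) * Real.sqrt (2⁻¹ * r p.1 p.2) = 2⁻¹ * r p.1 p.2 :=
      Real.mul_self_sqrt h0
    calc 2⁻¹ * (r p.1 p.2 * (ψ p.1 p.2 * χ p.1 p.2))
        = (2⁻¹ * r p.1 p.2) * (ψ p.1 p.2 * χ p.1 p.2) := by ring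
      _ = (Real.sqrt (2⁻¹ * r p.1 p.2) * Real.sqrt (2⁻¹ * r p.1 p.2)) * (ψ p.1 p.2 * χ p.1 p.2) := by rw [hss]
      _ = Real.sqrt (2⁻¹ * r p.1 p.2) * ψ p.1 p.2 * (Real.sqrt (2⁻¹ * r p.1 p.2) * χ p.1 p.2) := by ring
  have hCS := Finset.sum_mul_sq_le_sq_mul_sq P f g
  have h1 : ipr r P θ φ = ∑ p ∈ P, f p * g p := hfg θ φ
  have h2 : er r P θ = ∑ p ∈ P, f p ^ 2 := by
    have := hfg θ θ; unfold er; rw [this]; apply Finset.sum_congr rfl; intros; ring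
  have h3 : er r P φ = ∑ p ∈ P, g p ^ 2 := by
    have := hfg φ φ; unfold er; rw [this]; apply Finset.sum_congr rfl; intros; ring
  have he1 : 0 ≤ er r P θ := er_nonneg r P hP θ
  have he2 : 0 ≤ er r P φ := er_nonneg r P hP φ
  calc ipr r P θ φ ≤ |ipr r P θ φ| := le_abs_self _
    _ = Real.sqrt ((ipr r P θ φ) ^ 2) := (Real.sqrt_sq_eq_abs _).symm
    _ ≤ Real.sqrt (er r P θ * er r P φ) := by
        apply Real.sqrt_le_sqrt
        rw [h1, h2, h3]; exact hCS
    _ = Real.sqrt (er r P θ) * Real.sqrt (er r P φ) := Real.sqrt_mul he1 _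

lemma sqrt_er_add_le (r : V → V → ℝ) (P : Finset (V × V)) (hP : ∀ p ∈ P, 0 ≤ r p.1 p.2)
    (θ φ : V → V → ℝ) :
    Real.sqrt (er r P (fun u v => θ u v + φ u v))
      ≤ Real.sqrt (er r P θ) + Real.sqrt (er r P φ) := by
  have hexp : er r P (fun u v => θ u v + φ u v)
      = er r P θ + 2 * 1 * ipr r P θ φ + 1 ^ 2 * er r P φ := by
    have := er_expand r P θ φ 1
    simpa using this
  have hCS := ipr_le_sqrt r P hP θ φ
  have h1 : er r P (fun u v => θ u v + φ u v)
      ≤ (Real.sqrt (er r P θ) + Real.sqrt (er r P φ)) ^ 2 := by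
    have s1 : Real.sqrt (er r P θ) ^ 2 = er r P θ := Real.sq_sqrt (er_nonneg r P hP θ)
    have s2 : Real.sqrt (er r P φ) ^ 2 = er r P φ := Real.sq_sqrt (er_nonneg r P hP φ)
    nlinarith [hexp, hCS, s1, s2]
  calc Real.sqrt (er r P (fun u v => θ u v + φ u v))
      ≤ Real.sqrt ((Real.sqrt (er r P θ) + Real.sqrt (er r P φ)) ^ 2) := Real.sqrt_le_sqrt h1
    _ = |Real.sqrt (er r P θ) + Real.sqrt (er r P φ)| := Real.sqrt_sq_eq_abs _
    _ = Real.sqrt (er r P θ) + Real.sqrt (er r P φ) := by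
        rw [abs_of_nonneg]; positivity



lemma ipr_sub_left (r : V → V → ℝ) (P : Finset (V × V)) (θ φ σ : V → V → ℝ) :
    ipr r P (fun u v => θ u v - φ u v) σ = ipr r P θ σ - ipr r P φ σ := by
  unfold ipr
  rw [← mul_sub, ← Finset.sum_sub_distrib]
  congr 1
  apply Finset.sum_congr rfl; intros; ring

lemma er_eq_zero (r : V → V → ℝ) (P : Finset (V × V)) (hP : ∀ p ∈ P, 0 < r p.1 p.2)
    (θ : V → V → ℝ) (hsup : ∀ u v, (u, v) ∉ P → θ u v = 0) (h : er r P θ = 0) :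
    θ = fun _ _ => 0 := by
  classical
  have hsum : ∑ p ∈ P, r p.1 p.2 * (θ p.1 p.2 * θ p.1 p.2) = 0 := by
    unfold er ipr at h
    nlinarith [h]
  have hterm : ∀ p ∈ P, r p.1 p.2 * (θ p.1 p.2 * θ p.1 p.2) = 0 := by
    intro p hp
    have hnn : ∀ q ∈ P, 0 ≤ r q.1 q.2 * (θ q.1 q.2 * θ q.1 q.2) := by
      intro q hq; have := (hP q hq).le; nlinarith [mul_self_nonneg (θ q.1 q.2)]
    exact (Finset.sum_eq_zero_iff_of_nonneg hnn).1 hsum p hp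
  funext u v
  by_cases hp : (u, v) ∈ P
  · have h0 := hterm (u, v) hp
    have hr := hP (u, v) hp
    simp only at h0 hr
    rcases mul_eq_zero.1 h0 with h | h
    · exact absurd h hr.ne'
    · exact mul_self_eq_zero.1 h
  · exact hsup u v hp

open Classical in
/-- restriction of an edge function to pairs meeting `S` -/
noncomputable def restr (S : Finset V) (θ : V → V → ℝ) : V → V → ℝ :=
  fun u v => if u ∈ S ∨ v ∈ S then θ u v else 0

lemma er_restr_split (r : V → V → ℝ) (P : Finset (V × V)) (S : Finset V) (θ : V → V → ℝ) :
    er r P θ = er r P (restr S θ) + er r P (fun u v => θ u v - restr S θ u v) := by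
  unfold er ipr restr
  rw [← mul_add, ← Finset.sum_add_distrib]
  congr 1
  apply Finset.sum_congr rfl
  intro p _
  by_cases h : p.1 ∈ S ∨ p.2 ∈ S <;> simp only [restr, h, if_true, if_false] <;> ring

lemma er_restr_le (r : V → V → ℝ) (P : Finset (V × V)) (hP : ∀ p ∈ P, 0 ≤ r p.1 p.2)
    (S : Finset V) (θ : V → V → ℝ) : er r P (restr S θ) ≤ er r P θ := by
  unfold er ipr
  have : ∀ p ∈ P, r p.1 p.2 * (restr S θ p.1 p.2 * restr S θ p.1 p.2)
      ≤ r p.1 p.2 * (θ p.1 p.2 * θ p.1 p.2) := by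
    intro p hp
    by_cases h : p.1 ∈ S ∨ p.2 ∈ S
    · simp only [restr, h, if_true]
      exact le_rfl
    · simp only [restr, h, if_false]
      have := hP p hp
      nlinarith [mul_self_nonneg (θ p.1 p.2)]
  have := Finset.sum_le_sum this
  linarith

lemma er_subset (r : V → V → ℝ) {P Q : Finset (V × V)} (hPQ : P ⊆ Q) (θ : V → V → ℝ)
    (hsup : ∀ u v, (u, v) ∉ P → θ u v = 0) : er r Q θ = er r P θ := by
  unfold er ipr
  congr 1
  symm
  apply Finset.sum_subset hPQ
  intro p _ hp
  have : θ p.1 p.2 = 0 := hsup p.1 p.2 hp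
  simp [this]

lemma energy_eq_ofReal (r : V → V → ℝ) (P : Finset (V × V))
    (hP : ∀ p ∈ P, 0 ≤ r p.1 p.2) (θ : V → V → ℝ)
    (hsup : ∀ u v, (u, v) ∉ P → θ u v = 0) :
    energy r θ = ENNReal.ofReal (er r P θ) := by
  classical
  unfold energy er ipr
  have h1 : (∑' p : V × V, ENNReal.ofReal (r p.1 p.2 * θ p.1 p.2 ^ 2))
      = ∑ p ∈ P, ENNReal.ofReal (r p.1 p.2 * θ p.1 p.2 ^ 2) := by
    apply tsum_eq_sum
    intro p hp
    have : θ p.1 p.2 = 0 := hsup p.1 p.2 (by simpa using hp)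
    simp [this]
  rw [h1]
  have h2 : ∑ p ∈ P, ENNReal.ofReal (r p.1 p.2 * θ p.1 p.2 ^ 2)
      = ENNReal.ofReal (∑ p ∈ P, r p.1 p.2 * θ p.1 p.2 ^ 2) := by
    rw [ENNReal.ofReal_sum_of_nonneg]
    intro p hp
    have := hP p hp
    nlinarith [sq_nonneg (θ p.1 p.2)]
  have h3 : (2⁻¹ : ℝ≥0∞) = ENNReal.ofReal 2⁻¹ := by
    rw [ENNReal.ofReal_inv_of_pos (by norm_num)]
    norm_num
  rw [h2, h3, ← ENNReal.ofReal_mul (by norm_num : (0:ℝ) ≤ 2⁻¹)]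
  congr 2
  apply Finset.sum_congr rfl; intros; ring

lemma divg_addsmul (G : SimpleGraph V) [G.LocallyFinite] (θ φ : V → V → ℝ) (c : ℝ) (v : V) :
    divg G (fun u w => θ u w + c * φ u w) v = divg G θ v + c * divg G φ v := by
  unfold divg
  rw [Finset.sum_add_distrib, Finset.mul_sum]

lemma divg_sub (G : SimpleGraph V) [G.LocallyFinite] (θ φ : V → V → ℝ) (v : V) :
    divg G (fun u w => θ u w - φ u w) v = divg G θ v - divg G φ v := by
  unfold divg
  rw [← Finset.sum_sub_distrib]

lemma energy_restr_le (r : V → V → ℝ) (S : Finset V) (θ : V → V → ℝ) :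
    energy r (restr S θ) ≤ energy r θ := by
  unfold energy
  apply mul_le_mul_right
  apply ENNReal.tsum_le_tsum
  intro p
  by_cases h : p.1 ∈ S ∨ p.2 ∈ S
  · simp only [restr, h, if_true]
    exact le_rfl
  · simp only [restr, h, if_false]
    simp



lemma continuous_er (r : V → V → ℝ) (P : Finset (V × V)) :
    Continuous fun θ : V → V → ℝ => er r P θ := by
  unfold er ipr
  apply Continuous.mul continuous_const
  apply continuous_finset_sum
  intro p _
  apply Continuous.mul continuous_const
  exact (continuous_apply_apply p.1 p.2).mul
    (continuous_apply_apply p.1 p.2)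

/-- existence of energy minimizers over closed sets of finitely-supported edge functions -/
lemma exists_min (r : V → V → ℝ) (P : Finset (V × V)) (hP : ∀ p ∈ P, 0 < r p.1 p.2)
    (A : Set (V → V → ℝ)) (hA : IsClosed A)
    (hsup : ∀ θ ∈ A, ∀ u v, (u, v) ∉ P → θ u v = 0)
    (hne : A.Nonempty) : ∃ θ₀ ∈ A, ∀ θ ∈ A, er r P θ₀ ≤ er r P θ := by
  classical
  obtain ⟨θ₁, hθ₁⟩ := hne
  set c := er r P θ₁ with hc
  have hc0 : 0 ≤ c := er_nonneg r P (fun p hp => (hP p hp).le) θ₁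
  set B : V → V → ℝ := fun u v => Real.sqrt (2 * c / r u v) with hB
  -- coordinate bound for admissible low-energy functions
  have key : ∀ θ ∈ A, er r P θ ≤ c → ∀ u v, |θ u v| ≤ if (u, v) ∈ P then B u v else 0 := by
    intro θ hθ hec u v
    by_cases hp : (u, v) ∈ P
    · simp only [hp, if_true]
      have hterm : 2⁻¹ * (r u v * (θ u v * θ u v)) ≤ er r P θ := by
        unfold er ipr
        rw [Finset.mul_sum]
        exact Finset.single_le_sum (f := fun p => 2⁻¹ * (r p.1 p.2 * (θ p.1 p.2 * θ p.1 p.2)))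
          (fun q hq => by have := (hP q hq).le; nlinarith [mul_self_nonneg (θ q.1 q.2)]) hp
      have hr := hP (u, v) hp
      simp only at hr
      have h2 : θ u v * θ u v ≤ 2 * c / r u v := by
        rw [le_div_iff₀ hr]
        nlinarith
      calc |θ u v| = Real.sqrt (θ u v * θ u v) := by
            rw [← Real.sqrt_mul_self_eq_abs]
        _ ≤ B u v := Real.sqrt_le_sqrt h2
    · simp only [hp, if_false]
      rw [hsup θ hθ u v hp]
      simp
  -- the compact box
  set K₀ : Set (V → V → ℝ) := Set.univ.pi fun u => Set.univ.pi fun v =>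
    if (u, v) ∈ P then Set.Icc (-(B u v)) (B u v) else ({0} : Set ℝ) with hK₀
  have hK₀c : IsCompact K₀ := by
    apply isCompact_univ_pi
    intro u
    apply isCompact_univ_pi
    intro v
    by_cases hp : (u, v) ∈ P
    · simp only [hp, if_true]; exact isCompact_Icc
    · simp only [hp, if_false]; exact isCompact_singleton
  set K : Set (V → V → ℝ) := A ∩ {θ | er r P θ ≤ c} with hK
  have hKc : IsClosed K := hA.inter (isClosed_le (continuous_er r P) continuous_const)
  have hKsub : K ⊆ K₀ := by
    rintro θ ⟨hθA, hθc⟩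
    intro u _
    intro v _
    have := key θ hθA hθc u v
    by_cases hp : (u, v) ∈ P
    · simp only [hp, if_true] at this ⊢
      exact abs_le.1 this
    · simp only [hp, if_false] at this ⊢
      have h0 := abs_nonneg (θ u v)
      have : |θ u v| = 0 := le_antisymm this h0
      simpa using abs_eq_zero.1 this
  have hKcomp : IsCompact K := hK₀c.of_isClosed_subset hKc hKsub
  have hKne : K.Nonempty := ⟨θ₁, hθ₁, le_of_eq hc.symm⟩
  obtain ⟨θ₀, hθ₀K, hmin⟩ := hKcomp.exists_isMinOn hKne (continuous_er r P).continuousOn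
  refine ⟨θ₀, hθ₀K.1, fun θ hθ => ?_⟩
  by_cases hec : er r P θ ≤ c
  · exact hmin ⟨hθ, hec⟩
  · have h1 : er r P θ₀ ≤ c := hmin ⟨hθ₁, le_of_eq hc.symm⟩
    linarith [not_le.1 hec]

/-- variational orthogonality -/
lemma ortho (r : V → V → ℝ) (P : Finset (V × V)) (hP : ∀ p ∈ P, 0 ≤ r p.1 p.2)
    (A : Set (V → V → ℝ)) (θ₀ σ : V → V → ℝ) (hθ₀ : θ₀ ∈ A)
    (hmin : ∀ θ ∈ A, er r P θ₀ ≤ er r P θ)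
    (hdir : ∀ t : ℝ, (fun u v => θ₀ u v + t * σ u v) ∈ A) :
    ipr r P θ₀ σ = 0 := by
  set cc := ipr r P θ₀ σ with hcc
  set d := er r P σ with hd
  have hd0 : 0 ≤ d := er_nonneg r P hP σ
  have hQ : ∀ t : ℝ, 0 ≤ 2 * t * cc + t ^ 2 * d := by
    intro t
    have := hmin _ (hdir t)
    rw [er_expand r P θ₀ σ t] at this
    linarith
  by_contra hne
  have hd1 : (0:ℝ) < d + 1 := by linarith
  have ht := hQ (-cc / (d + 1))
  have hpoly : 0 ≤ -cc ^ 2 * (d + 2) := by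
    have h1 : (2 * (-cc / (d + 1)) * cc + (-cc / (d + 1)) ^ 2 * d) * (d + 1) ^ 2
        = -cc ^ 2 * (d + 2) := by
      field_simp
      ring
    nlinarith [mul_nonneg ht (sq_nonneg (d + 1))]
  have hsq : cc ^ 2 ≤ 0 := by nlinarith
  have : cc ^ 2 = 0 := le_antisymm hsq (sq_nonneg cc)
  exact hne (pow_eq_zero_iff (by norm_num) |>.1 this)



open Classical in
noncomputable def eflow (a b : V) : V → V → ℝ := fun u v =>
  if u = a ∧ v = b then 1 else if u = b ∧ v = a then -1 else 0

lemma eflow_antisymm (a b : V) (hab : a ≠ b) : ∀ u v, eflow a b u v = -eflow a b v u := by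
  intro u v
  unfold eflow
  by_cases h1 : u = a ∧ v = b
  · have c1 : ¬(v = a ∧ u = b) := fun h => hab (h1.1.symm.trans h.2)
    rw [if_pos h1, if_neg c1, if_pos ⟨h1.2, h1.1⟩]
    norm_num
  · by_cases h2 : u = b ∧ v = a
    · rw [if_neg h1, if_pos h2, if_pos ⟨h2.2, h2.1⟩]
    · have c1 : ¬(v = a ∧ u = b) := fun h => h2 ⟨h.2, h.1⟩
      have c2 : ¬(v = b ∧ u = a) := fun h => h1 ⟨h.2, h.1⟩
      rw [if_neg h1, if_neg h2, if_neg c1, if_neg c2]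
      norm_num

lemma eflow_support {a b u v : V} (h : eflow a b u v ≠ 0) :
    (u = a ∧ v = b) ∨ (u = b ∧ v = a) := by
  unfold eflow at h
  by_cases h1 : u = a ∧ v = b
  · exact Or.inl h1
  · by_cases h2 : u = b ∧ v = a
    · exact Or.inr h2
    · rw [if_neg h1, if_neg h2] at h
      exact absurd rfl h

lemma eflow_off {G : SimpleGraph V} {a b : V} (hab : G.Adj a b) {u v : V}
    (h : ¬G.Adj u v) : eflow a b u v = 0 := by
  by_contra hne
  rcases eflow_support hne with ⟨rfl, rfl⟩ | ⟨rfl, rfl⟩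
  · exact h hab
  · exact h hab.symm

lemma divg_eflow (G : SimpleGraph V) [G.LocallyFinite] (a b : V) (hab : G.Adj a b) :
    divg G (eflow a b) = pointSource a b := by
  classical
  have hne : a ≠ b := hab.ne
  funext v
  unfold divg
  by_cases hva : v = a
  · subst hva
    have h1 : ∀ u ∈ G.neighborFinset v, eflow v b v u = if u = b then 1 else 0 := by
      intro u _
      unfold eflow
      by_cases hub : u = b
      · rw [if_pos ⟨rfl, hub⟩, if_pos hub]
      · have c1 : ¬(v = v ∧ u = b) := fun h => hub h.2
        have c2 : ¬(v = b ∧ u = v) := fun h => hne h.1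
        rw [if_neg c1, if_neg c2, if_neg hub]
    rw [Finset.sum_congr rfl h1, Finset.sum_ite_eq' (G.neighborFinset v) b (fun _ => (1:ℝ))]
    have hb : b ∈ G.neighborFinset v := by simpa using hab
    rw [if_pos hb]
    unfold pointSource
    rw [if_pos rfl]
  · by_cases hvb : v = b
    · subst hvb
      have h1 : ∀ u ∈ G.neighborFinset v, eflow a v v u = if u = a then -1 else 0 := by
        intro u _
        unfold eflow
        by_cases hua : u = a
        · have c1 : ¬(v = a ∧ u = v) := fun h => hva h.1
          rw [if_neg c1, if_pos ⟨rfl, hua⟩, if_pos hua]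
        · have c1 : ¬(v = a ∧ u = v) := fun h => hva h.1
          have c2 : ¬(v = v ∧ u = a) := fun h => hua h.2
          rw [if_neg c1, if_neg c2, if_neg hua]
      rw [Finset.sum_congr rfl h1, Finset.sum_ite_eq' (G.neighborFinset v) a (fun _ => (-1:ℝ))]
      have ha : a ∈ G.neighborFinset v := by simpa using hab.symm
      rw [if_pos ha]
      unfold pointSource
      rw [if_neg hva, if_pos rfl]
    · have h1 : ∀ u ∈ G.neighborFinset v, eflow a b v u = 0 := by
        intro u _
        unfold eflow
        have c1 : ¬(v = a ∧ u = b) := fun h => hva h.1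
        have c2 : ¬(v = b ∧ u = a) := fun h => hvb h.1
        rw [if_neg c1, if_neg c2]
      rw [Finset.sum_congr rfl h1, Finset.sum_const_zero]
      unfold pointSource
      rw [if_neg hva, if_neg hvb]

lemma pointSource_add {a c b : V} (hac : a ≠ c) (hcb : c ≠ b) (hab : a ≠ b) (w : V) :
    pointSource a c w + pointSource c b w = pointSource a b w := by
  unfold pointSource
  by_cases hwa : w = a
  · rw [if_pos hwa, if_pos hwa, if_neg (by rw [hwa]; exact hac), if_neg (by rw [hwa]; exact hab)]
    norm_num
  · rw [if_neg hwa, if_neg hwa]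
    by_cases hwc : w = c
    · rw [if_pos hwc, if_pos hwc, if_neg (by rw [hwc]; exact hcb)]
      norm_num
    · rw [if_neg hwc, if_neg hwc]
      by_cases hwb : w = b
      · simp only [if_pos hwb]
        norm_num
      · simp only [if_neg hwb]
        norm_num

noncomputable def wflow (G : SimpleGraph V) : ∀ {a b : V}, G.Walk a b → (V → V → ℝ)
  | _, _, SimpleGraph.Walk.nil => fun _ _ => 0
  | _, _, @SimpleGraph.Walk.cons _ _ a c _ _ w => fun u v => eflow a c u v + wflow G w u v

lemma wflow_antisymm (G : SimpleGraph V) {a b : V} (w : G.Walk a b) :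
    ∀ u v, wflow G w u v = -wflow G w v u := by
  induction w with
  | nil => intro u v; simp [wflow]
  | cons h w ih =>
    intro u v
    simp only [wflow]
    rw [eflow_antisymm _ _ h.ne u v, ih u v]
    ring

lemma wflow_off (G : SimpleGraph V) {a b : V} (w : G.Walk a b) {u v : V} (huv : ¬G.Adj u v) :
    wflow G w u v = 0 := by
  induction w with
  | nil => simp [wflow]
  | cons h w ih =>
    simp only [wflow]
    rw [eflow_off h huv, ih]
    ring

lemma wflow_support (G : SimpleGraph V) {a b : V} (w : G.Walk a b) {u v : V}
    (h : wflow G w u v ≠ 0) : u ∈ w.support ∧ v ∈ w.support := by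
  induction w with
  | nil => simp [wflow] at h
  | @cons x y z hadj w ih =>
    simp only [wflow] at h
    rw [SimpleGraph.Walk.support_cons]
    by_cases he : eflow x y u v = 0
    · rw [he, zero_add] at h
      exact ⟨List.mem_cons_of_mem _ (ih h).1, List.mem_cons_of_mem _ (ih h).2⟩
    · rcases eflow_support he with ⟨rfl, rfl⟩ | ⟨rfl, rfl⟩
      · exact ⟨List.mem_cons_self, List.mem_cons_of_mem _ w.start_mem_support⟩
      · exact ⟨List.mem_cons_of_mem _ w.start_mem_support, List.mem_cons_self⟩

lemma divg_add (G : SimpleGraph V) [G.LocallyFinite] (θ φ : V → V → ℝ) (v : V) :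
    divg G (fun u w => θ u w + φ u w) v = divg G θ v + divg G φ v := by
  unfold divg
  rw [Finset.sum_add_distrib]

lemma divg_wflow (G : SimpleGraph V) [G.LocallyFinite] {a b : V} (w : G.Walk a b)
    (hw : w.IsPath) (hab : a ≠ b) : divg G (wflow G w) = pointSource a b := by
  induction w with
  | nil => exact absurd rfl hab
  | @cons a c b hadj w ih =>
    have hw' : w.IsPath := hw.of_cons
    have hna : a ∉ w.support := (SimpleGraph.Walk.cons_isPath_iff _ _).1 hw |>.2
    funext v
    have hsplit : divg G (wflow G (SimpleGraph.Walk.cons hadj w)) v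
        = divg G (eflow a c) v + divg G (wflow G w) v := divg_add G _ _ v
    rw [hsplit, divg_eflow G a c hadj]
    by_cases hcb : c = b
    · subst hcb
      have : w = SimpleGraph.Walk.nil := SimpleGraph.Walk.isPath_iff_eq_nil.1 hw'
      subst this
      simp [wflow, divg]
    · rw [ih hw' hcb]
      exact pointSource_add hadj.ne hcb hab v



section Adm

variable (G : SimpleGraph V) [G.LocallyFinite]

def ShortAdm (S : Finset V) (p q : V) (θ : V → V → ℝ) : Prop :=
  (∀ u v, θ u v = -θ v u) ∧ (∀ u v, ¬G.Adj u v → θ u v = 0) ∧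
    (∀ u v, u ∉ S → v ∉ S → θ u v = 0) ∧ ∀ v ∈ S, divg G θ v = pointSource p q v

def CutAdm (S : Finset V) (p q : V) (θ : V → V → ℝ) : Prop :=
  IsFlow G θ ∧ divg G θ = pointSource p q ∧ ∀ u v, (u ∉ S ∨ v ∉ S) → θ u v = 0

lemma shortRes_eq (r : V → V → ℝ) (p q : V) (S : Finset V) :
    shortRes G r p q S = ⨅ θ, ⨅ _ : ShortAdm G S p q θ, energy r θ := rfl

lemma cutRes_eq (r : V → V → ℝ) (p q : V) (S : Finset V) :
    cutRes G r p q S = ⨅ θ, ⨅ _ : CutAdm G S p q θ, energy r θ := rfl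

open Classical in
noncomputable def nb (S : Finset V) : Finset V := S ∪ S.biUnion fun v => G.neighborFinset v

open Classical in
noncomputable def pset (S : Finset V) : Finset (V × V) :=
  (nb G S ×ˢ nb G S).filter fun p => G.Adj p.1 p.2 ∧ (p.1 ∈ S ∨ p.2 ∈ S)

lemma pset_adj {S : Finset V} {p : V × V} (hp : p ∈ pset G S) : G.Adj p.1 p.2 := by
  classical
  exact ((Finset.mem_filter.1 hp).2).1

lemma nb_mono {S T : Finset V} (h : S ⊆ T) : nb G S ⊆ nb G T := by
  classical
  intro x hx
  rcases Finset.mem_union.1 hx with hx | hx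
  · exact Finset.mem_union.2 (Or.inl (h hx))
  · rcases Finset.mem_biUnion.1 hx with ⟨v, hv, hx⟩
    exact Finset.mem_union.2 (Or.inr (Finset.mem_biUnion.2 ⟨v, h hv, hx⟩))

lemma pset_mono {S T : Finset V} (h : S ⊆ T) : pset G S ⊆ pset G T := by
  classical
  intro p hp
  unfold pset at hp ⊢
  rw [Finset.mem_filter] at hp ⊢
  obtain ⟨hmem, hadj, hor⟩ := hp
  rw [Finset.mem_product] at hmem
  exact ⟨Finset.mem_product.2 ⟨nb_mono G h hmem.1, nb_mono G h hmem.2⟩, hadj,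
    hor.imp (fun h' => h h') (fun h' => h h')⟩

lemma mem_pset {S : Finset V} {u v : V} (hadj : G.Adj u v) (h : u ∈ S ∨ v ∈ S) :
    (u, v) ∈ pset G S := by
  classical
  unfold pset
  rw [Finset.mem_filter, Finset.mem_product]
  refine ⟨⟨?_, ?_⟩, hadj, h⟩
  · rcases h with h | h
    · exact Finset.mem_union.2 (Or.inl h)
    · exact Finset.mem_union.2 (Or.inr (Finset.mem_biUnion.2
        ⟨v, h, by simpa using hadj.symm⟩))
  · rcases h with h | h
    · exact Finset.mem_union.2 (Or.inr (Finset.mem_biUnion.2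
        ⟨u, h, by simpa using hadj⟩))
    · exact Finset.mem_union.2 (Or.inl h)

lemma shortAdm_sup {S : Finset V} {p q : V} {θ : V → V → ℝ} (h : ShortAdm G S p q θ) :
    ∀ u v, (u, v) ∉ pset G S → θ u v = 0 := by
  intro u v hp
  by_contra hne
  have hadj : G.Adj u v := by
    by_contra hna
    exact hne (h.2.1 u v hna)
  have hor : u ∈ S ∨ v ∈ S := by
    by_contra hno
    push_neg at hno
    exact hne (h.2.2.1 u v hno.1 hno.2)
  exact hp (mem_pset G hadj hor)

lemma cutAdm_short {S : Finset V} {p q : V} {θ : V → V → ℝ} (h : CutAdm G S p q θ) :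
    ShortAdm G S p q θ := by
  refine ⟨h.1.1, h.1.2, fun u v hu hv => h.2.2 u v (Or.inl hu), fun v _ => by rw [h.2.1]⟩

lemma continuous_divg (v : V) : Continuous fun θ : V → V → ℝ => divg G θ v := by
  unfold divg
  exact continuous_finset_sum _ fun u _ => (continuous_apply u).comp (continuous_apply v)

lemma isClosed_imp {α : Type*} [TopologicalSpace α] {C : Prop} {s : Set α}
    (hs : IsClosed s) : IsClosed {θ : α | C → θ ∈ s} := by
  by_cases hC : C
  · simpa [hC] using hs
  · simp [hC]

lemma continuous_eval (u v : V) : Continuous fun θ : V → V → ℝ => θ u v :=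
  (continuous_apply v).comp (continuous_apply u)

lemma isClosed_short (S : Finset V) (p q : V) :
    IsClosed {θ : V → V → ℝ | ShortAdm G S p q θ} := by
  have h1 : IsClosed {θ : V → V → ℝ | ∀ u v, θ u v = -θ v u} := by
    rw [Set.setOf_forall]
    refine isClosed_iInter fun u => ?_
    rw [Set.setOf_forall]
    exact isClosed_iInter fun v =>
      isClosed_eq (continuous_eval u v) (continuous_eval v u).neg
  have h2 : IsClosed {θ : V → V → ℝ | ∀ u v, ¬G.Adj u v → θ u v = 0} := by
    rw [Set.setOf_forall]
    refine isClosed_iInter fun u => ?_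
    rw [Set.setOf_forall]
    refine isClosed_iInter fun v => ?_
    exact isClosed_imp (s := {θ : V → V → ℝ | θ u v = 0})
      (isClosed_eq (continuous_eval u v) continuous_const)
  have h3 : IsClosed {θ : V → V → ℝ | ∀ u v, u ∉ S → v ∉ S → θ u v = 0} := by
    rw [Set.setOf_forall]
    refine isClosed_iInter fun u => ?_
    rw [Set.setOf_forall]
    refine isClosed_iInter fun v => ?_
    exact isClosed_imp (s := {θ : V → V → ℝ | v ∉ S → θ u v = 0})
      (isClosed_imp (s := {θ : V → V → ℝ | θ u v = 0})
        (isClosed_eq (continuous_eval u v) continuous_const))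
  have h4 : IsClosed {θ : V → V → ℝ | ∀ v ∈ S, divg G θ v = pointSource p q v} := by
    rw [Set.setOf_forall]
    refine isClosed_iInter fun v => ?_
    exact isClosed_imp (s := {θ : V → V → ℝ | divg G θ v = pointSource p q v})
      (isClosed_eq (continuous_divg G v) continuous_const)
  have : {θ : V → V → ℝ | ShortAdm G S p q θ}
      = {θ | ∀ u v, θ u v = -θ v u} ∩ ({θ | ∀ u v, ¬G.Adj u v → θ u v = 0}
        ∩ ({θ | ∀ u v, u ∉ S → v ∉ S → θ u v = 0}
          ∩ {θ | ∀ v ∈ S, divg G θ v = pointSource p q v})) := by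
    ext θ
    simp only [ShortAdm, Set.mem_setOf_eq, Set.mem_inter_iff]
  rw [this]
  exact h1.inter (h2.inter (h3.inter h4))

lemma isClosed_cut (S : Finset V) (p q : V) :
    IsClosed {θ : V → V → ℝ | CutAdm G S p q θ} := by
  have h1 : IsClosed {θ : V → V → ℝ | IsFlow G θ} := by
    have ha : IsClosed {θ : V → V → ℝ | ∀ u v, θ u v = -θ v u} := by
      rw [Set.setOf_forall]
      refine isClosed_iInter fun u => ?_
      rw [Set.setOf_forall]
      exact isClosed_iInter fun v =>
        isClosed_eq (continuous_eval u v) (continuous_eval v u).neg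
    have hb : IsClosed {θ : V → V → ℝ | ∀ u v, ¬G.Adj u v → θ u v = 0} := by
      rw [Set.setOf_forall]
      refine isClosed_iInter fun u => ?_
      rw [Set.setOf_forall]
      refine isClosed_iInter fun v => ?_
      exact isClosed_imp (s := {θ : V → V → ℝ | θ u v = 0})
        (isClosed_eq (continuous_eval u v) continuous_const)
    have : {θ : V → V → ℝ | IsFlow G θ}
        = {θ | ∀ u v, θ u v = -θ v u} ∩ {θ | ∀ u v, ¬G.Adj u v → θ u v = 0} := by
      ext θ; simp only [IsFlow, Set.mem_setOf_eq, Set.mem_inter_iff]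
    rw [this]; exact ha.inter hb
  have h2 : IsClosed {θ : V → V → ℝ | divg G θ = pointSource p q} := by
    have : {θ : V → V → ℝ | divg G θ = pointSource p q}
        = ⋂ v, {θ | divg G θ v = pointSource p q v} := by
      ext θ
      simp only [Set.mem_setOf_eq, Set.mem_iInter, funext_iff]
    rw [this]
    exact isClosed_iInter fun v => isClosed_eq (continuous_divg G v) continuous_const
  have h3 : IsClosed {θ : V → V → ℝ | ∀ u v, (u ∉ S ∨ v ∉ S) → θ u v = 0} := by
    rw [Set.setOf_forall]
    refine isClosed_iInter fun u => ?_
    rw [Set.setOf_forall]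
    refine isClosed_iInter fun v => ?_
    exact isClosed_imp (s := {θ : V → V → ℝ | θ u v = 0})
      (isClosed_eq (continuous_eval u v) continuous_const)
  have : {θ : V → V → ℝ | CutAdm G S p q θ}
      = {θ | IsFlow G θ} ∩ ({θ | divg G θ = pointSource p q}
        ∩ {θ | ∀ u v, (u ∉ S ∨ v ∉ S) → θ u v = 0}) := by
    ext θ; simp only [CutAdm, Set.mem_setOf_eq, Set.mem_inter_iff]
  rw [this]
  exact h1.inter (h2.inter h3)

end Adm


section Min

variable (G : SimpleGraph V) [G.LocallyFinite] (r : V → V → ℝ)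

open Classical in
noncomputable def smin (S : Finset V) (p q : V) : V → V → ℝ :=
  if h : ∃ θ₀, ShortAdm G S p q θ₀ ∧
      ∀ θ, ShortAdm G S p q θ → er r (pset G S) θ₀ ≤ er r (pset G S) θ
  then h.choose else fun _ _ => 0

open Classical in
noncomputable def cmin (S : Finset V) (p q : V) : V → V → ℝ :=
  if h : ∃ θ₀, CutAdm G S p q θ₀ ∧
      ∀ θ, CutAdm G S p q θ → er r (pset G S) θ₀ ≤ er r (pset G S) θ
  then h.choose else fun _ _ => 0

variable {G r}

lemma smin_spec (hr : ∀ u v, G.Adj u v → 0 < r u v) {S : Finset V} {p q : V}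
    (hne : ∃ θ, ShortAdm G S p q θ) :
    ShortAdm G S p q (smin G r S p q) ∧
      ∀ θ, ShortAdm G S p q θ → er r (pset G S) (smin G r S p q) ≤ er r (pset G S) θ := by
  have hex := exists_min r (pset G S) (fun p hp => hr _ _ (pset_adj G hp))
    {θ | ShortAdm G S p q θ} (isClosed_short G S p q)
    (fun θ hθ u v h => shortAdm_sup G hθ u v h) hne
  have hex' : ∃ θ₀, ShortAdm G S p q θ₀ ∧
      ∀ θ, ShortAdm G S p q θ → er r (pset G S) θ₀ ≤ er r (pset G S) θ := by
    obtain ⟨θ₀, h1, h2⟩ := hex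
    exact ⟨θ₀, h1, fun θ h => h2 θ h⟩
  rw [smin, dif_pos hex']
  exact hex'.choose_spec

lemma cmin_spec (hr : ∀ u v, G.Adj u v → 0 < r u v) {S : Finset V} {p q : V}
    (hne : ∃ θ, CutAdm G S p q θ) :
    CutAdm G S p q (cmin G r S p q) ∧
      ∀ θ, CutAdm G S p q θ → er r (pset G S) (cmin G r S p q) ≤ er r (pset G S) θ := by
  have hex := exists_min r (pset G S) (fun p hp => hr _ _ (pset_adj G hp))
    {θ | CutAdm G S p q θ} (isClosed_cut G S p q)
    (fun θ hθ u v h => shortAdm_sup G (cutAdm_short G hθ) u v h) hne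
  have hex' : ∃ θ₀, CutAdm G S p q θ₀ ∧
      ∀ θ, CutAdm G S p q θ → er r (pset G S) θ₀ ≤ er r (pset G S) θ := by
    obtain ⟨θ₀, h1, h2⟩ := hex
    exact ⟨θ₀, h1, fun θ h => h2 θ h⟩
  rw [cmin, dif_pos hex']
  exact hex'.choose_spec

lemma pset_nonneg (hr : ∀ u v, G.Adj u v → 0 < r u v) (S : Finset V) :
    ∀ p ∈ pset G S, 0 ≤ r p.1 p.2 := fun p hp => (hr _ _ (pset_adj G hp)).le

lemma energy_shortAdm (hr : ∀ u v, G.Adj u v → 0 < r u v) {S : Finset V} {p q : V}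
    {θ : V → V → ℝ} (hθ : ShortAdm G S p q θ) :
    energy r θ = ENNReal.ofReal (er r (pset G S) θ) :=
  energy_eq_ofReal r (pset G S) (pset_nonneg hr S) θ (shortAdm_sup G hθ)

lemma shortRes_val (hr : ∀ u v, G.Adj u v → 0 < r u v) {S : Finset V} {p q : V}
    (hne : ∃ θ, ShortAdm G S p q θ) :
    shortRes G r p q S = ENNReal.ofReal (er r (pset G S) (smin G r S p q)) := by
  obtain ⟨hadm, hmin⟩ := smin_spec hr hne
  apply le_antisymm
  · rw [shortRes_eq]
    refine iInf_le_of_le (smin G r S p q) (iInf_le_of_le hadm ?_)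
    rw [energy_shortAdm hr hadm]
  · rw [shortRes_eq]
    refine le_iInf fun θ => le_iInf fun hθ => ?_
    rw [energy_shortAdm hr hθ]
    exact ENNReal.ofReal_le_ofReal (hmin θ hθ)

lemma cutRes_val (hr : ∀ u v, G.Adj u v → 0 < r u v) {S : Finset V} {p q : V}
    (hne : ∃ θ, CutAdm G S p q θ) :
    cutRes G r p q S = ENNReal.ofReal (er r (pset G S) (cmin G r S p q)) := by
  obtain ⟨hadm, hmin⟩ := cmin_spec hr hne
  apply le_antisymm
  · rw [cutRes_eq]
    refine iInf_le_of_le (cmin G r S p q) (iInf_le_of_le hadm ?_)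
    rw [energy_shortAdm hr (cutAdm_short G hadm)]
  · rw [cutRes_eq]
    refine le_iInf fun θ => le_iInf fun hθ => ?_
    rw [energy_shortAdm hr (cutAdm_short G hθ)]
    exact ENNReal.ofReal_le_ofReal (hmin θ hθ)

lemma wflow_cutAdm {S : Finset V} {p q : V} (w : G.Walk p q) (hw : w.IsPath)
    (hpq : p ≠ q) (hsub : ∀ x ∈ w.support, x ∈ S) : CutAdm G S p q (wflow G w) := by
  refine ⟨⟨wflow_antisymm G w, fun u v h => wflow_off G w h⟩, divg_wflow G w hw hpq, ?_⟩
  intro u v h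
  by_contra hne
  obtain ⟨hu, hv⟩ := wflow_support G w hne
  rcases h with h | h
  · exact h (hsub u hu)
  · exact h (hsub v hv)

/-- restriction of a `ShortAdm` function for a larger set -/
lemma restr_shortAdm {S T : Finset V} (hST : S ⊆ T) {p q : V} {θ : V → V → ℝ}
    (hθ : ShortAdm G T p q θ) : ShortAdm G S p q (restr S θ) := by
  classical
  obtain ⟨h1, h2, h3, h4⟩ := hθ
  refine ⟨?_, ?_, ?_, ?_⟩
  · intro u v
    unfold restr
    by_cases h : u ∈ S ∨ v ∈ S
    · rw [if_pos h, if_pos (Or.symm h), h1 u v]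
    · rw [if_neg h, if_neg (fun h' => h (Or.symm h'))]
      norm_num
  · intro u v hna
    unfold restr
    by_cases h : u ∈ S ∨ v ∈ S
    · rw [if_pos h]; exact h2 u v hna
    · rw [if_neg h]
  · intro u v hu hv
    unfold restr
    rw [if_neg (by tauto)]
  · intro v hv
    have : ∀ u ∈ G.neighborFinset v, restr S θ v u = θ v u := by
      intro u _
      unfold restr
      rw [if_pos (Or.inl hv)]
    unfold divg
    rw [Finset.sum_congr rfl this]
    exact h4 v (hST hv)

/-- restriction of a finite-energy unit flow -/
lemma restr_shortAdm_flow {S : Finset V} {p q : V} {θ : V → V → ℝ}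
    (hflow : IsFlow G θ) (hdiv : divg G θ = pointSource p q) :
    ShortAdm G S p q (restr S θ) := by
  classical
  refine ⟨?_, ?_, ?_, ?_⟩
  · intro u v
    unfold restr
    by_cases h : u ∈ S ∨ v ∈ S
    · rw [if_pos h, if_pos (Or.symm h), hflow.1 u v]
    · rw [if_neg h, if_neg (fun h' => h (Or.symm h'))]
      norm_num
  · intro u v hna
    unfold restr
    by_cases h : u ∈ S ∨ v ∈ S
    · rw [if_pos h]; exact hflow.2 u v hna
    · rw [if_neg h]
  · intro u v hu hv
    unfold restr
    rw [if_neg (by tauto)]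
  · intro v hv
    have : ∀ u ∈ G.neighborFinset v, restr S θ v u = θ v u := by
      intro u _
      unfold restr
      rw [if_pos (Or.inl hv)]
    unfold divg
    rw [Finset.sum_congr rfl this]
    have := congrFun hdiv v
    unfold divg at this
    exact this

lemma shortRes_mono (p q : V) {S T : Finset V} (hST : S ⊆ T) :
    shortRes G r p q S ≤ shortRes G r p q T := by
  rw [shortRes_eq, shortRes_eq]
  refine le_iInf fun θ => le_iInf fun hθ => ?_
  refine iInf_le_of_le (restr S θ) (iInf_le_of_le (restr_shortAdm hST hθ) ?_)
  exact energy_restr_le r S θ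

lemma shortRes_le_oddRes (p q : V) (S : Finset V) :
    shortRes G r p q S ≤ oddRes G r p q := by
  rw [shortRes_eq]
  unfold oddRes
  refine le_iInf fun θ => le_iInf fun hθ => ?_
  obtain ⟨hflow, _, hdiv⟩ := hθ
  refine iInf_le_of_le (restr S θ) (iInf_le_of_le (restr_shortAdm_flow hflow hdiv) ?_)
  exact energy_restr_le r S θ

lemma cutRes_anti (p q : V) {S T : Finset V} (hST : S ⊆ T) :
    cutRes G r p q T ≤ cutRes G r p q S := by
  rw [cutRes_eq, cutRes_eq]
  refine le_iInf fun θ => le_iInf fun hθ => ?_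
  refine iInf_le_of_le θ (iInf_le_of_le ⟨hθ.1, hθ.2.1, fun u v h =>
    hθ.2.2 u v (h.imp (fun h' hS => h' (hST hS)) (fun h' hS => h' (hST hS)))⟩ le_rfl)

lemma oddRes_le_cutRes (p q : V) (S : Finset V) :
    oddRes G r p q ≤ cutRes G r p q S := by
  rw [cutRes_eq]
  refine le_iInf fun θ => le_iInf fun hθ => ?_
  by_cases he : energy r θ = ⊤
  · rw [he]; exact le_top
  · unfold oddRes
    exact iInf_le_of_le θ (iInf_le_of_le ⟨hθ.1, he, hθ.2.1⟩ le_rfl)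

lemma oddRes_le_evenRes (p q : V) : oddRes G r p q ≤ evenRes G r p q := by
  unfold evenRes
  exact le_iInf fun S => le_iInf fun _ => oddRes_le_cutRes p q S

lemma evenRes_le_cutRes {p q : V} {S : Finset V} (hp : p ∈ S) (hq : q ∈ S) :
    evenRes G r p q ≤ cutRes G r p q S := by
  unfold evenRes
  exact iInf_le_of_le S (iInf_le_of_le ⟨hp, hq⟩ le_rfl)

end Min


section Key

variable (G : SimpleGraph V) [G.LocallyFinite] (r : V → V → ℝ)

def ShortDir (S : Finset V) (σ : V → V → ℝ) : Prop :=
  (∀ u v, σ u v = -σ v u) ∧ (∀ u v, ¬G.Adj u v → σ u v = 0) ∧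
    (∀ u v, u ∉ S → v ∉ S → σ u v = 0) ∧ ∀ v ∈ S, divg G σ v = 0

def CutDir (S : Finset V) (σ : V → V → ℝ) : Prop :=
  (∀ u v, σ u v = -σ v u) ∧ (∀ u v, ¬G.Adj u v → σ u v = 0) ∧
    (∀ u v, (u ∉ S ∨ v ∉ S) → σ u v = 0) ∧ ∀ v, divg G σ v = 0

variable {G r}

lemma sup_pset {S : Finset V} {θ : V → V → ℝ} (h2 : ∀ u v, ¬G.Adj u v → θ u v = 0)
    (h3 : ∀ u v, u ∉ S → v ∉ S → θ u v = 0) :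
    ∀ u v, (u, v) ∉ pset G S → θ u v = 0 := by
  intro u v hp
  by_contra hne
  have hadj : G.Adj u v := by
    by_contra hna
    exact hne (h2 u v hna)
  have hor : u ∈ S ∨ v ∈ S := by
    by_contra hno
    push_neg at hno
    exact hne (h3 u v hno.1 hno.2)
  exact hp (mem_pset G hadj hor)

lemma shortAdm_addDir {S : Finset V} {p q : V} {θ σ : V → V → ℝ} (t : ℝ)
    (hθ : ShortAdm G S p q θ) (hσ : ShortDir G S σ) :
    ShortAdm G S p q (fun u v => θ u v + t * σ u v) := by
  refine ⟨fun u v => ?_, fun u v h => ?_, fun u v hu hv => ?_, fun v hv => ?_⟩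
  · beta_reduce; rw [hθ.1 u v, hσ.1 u v]; ring
  · beta_reduce; rw [hθ.2.1 u v h, hσ.2.1 u v h]; ring
  · beta_reduce; rw [hθ.2.2.1 u v hu hv, hσ.2.2.1 u v hu hv]; ring
  · rw [divg_addsmul G θ σ t v, hθ.2.2.2 v hv, hσ.2.2.2 v hv]; ring

lemma cutAdm_addDir {S : Finset V} {p q : V} {θ σ : V → V → ℝ} (t : ℝ)
    (hθ : CutAdm G S p q θ) (hσ : CutDir G S σ) :
    CutAdm G S p q (fun u v => θ u v + t * σ u v) := by
  refine ⟨⟨fun u v => ?_, fun u v h => ?_⟩, ?_, fun u v h => ?_⟩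
  · beta_reduce; rw [hθ.1.1 u v, hσ.1 u v]; ring
  · beta_reduce; rw [hθ.1.2 u v h, hσ.2.1 u v h]; ring
  · funext v
    rw [divg_addsmul G θ σ t v, hσ.2.2.2 v, congrFun hθ.2.1 v]; ring
  · beta_reduce; rw [hθ.2.2 u v h, hσ.2.2.1 u v h]; ring

lemma shortAdm_sub {S : Finset V} {p q : V} {θ φ : V → V → ℝ}
    (hθ : ShortAdm G S p q θ) (hφ : ShortAdm G S p q φ) :
    ShortDir G S (fun u v => θ u v - φ u v) := by
  refine ⟨fun u v => ?_, fun u v h => ?_, fun u v hu hv => ?_, fun v hv => ?_⟩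
  · beta_reduce; rw [hθ.1 u v, hφ.1 u v]; ring
  · beta_reduce; rw [hθ.2.1 u v h, hφ.2.1 u v h]; ring
  · beta_reduce; rw [hθ.2.2.1 u v hu hv, hφ.2.2.1 u v hu hv]; ring
  · rw [divg_sub G θ φ v, hθ.2.2.2 v hv, hφ.2.2.2 v hv]; ring

lemma smin_ortho (hr : ∀ u v, G.Adj u v → 0 < r u v) {S : Finset V} {p q : V}
    (hne : ∃ θ, ShortAdm G S p q θ) {σ : V → V → ℝ} (hσ : ShortDir G S σ) :
    ipr r (pset G S) (smin G r S p q) σ = 0 := by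
  obtain ⟨hadm, hmin⟩ := smin_spec hr hne
  exact ortho r (pset G S) (pset_nonneg hr S) {θ | ShortAdm G S p q θ}
    (smin G r S p q) σ hadm (fun θ hθ => hmin θ hθ)
    (fun t => shortAdm_addDir t hadm hσ)

lemma cmin_ortho (hr : ∀ u v, G.Adj u v → 0 < r u v) {S : Finset V} {p q : V}
    (hne : ∃ θ, CutAdm G S p q θ) {σ : V → V → ℝ} (hσ : CutDir G S σ) :
    ipr r (pset G S) (cmin G r S p q) σ = 0 := by
  obtain ⟨hadm, hmin⟩ := cmin_spec hr hne
  exact ortho r (pset G S) (pset_nonneg hr S) {θ | CutAdm G S p q θ}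
    (cmin G r S p q) σ hadm (fun θ hθ => hmin θ hθ)
    (fun t => cutAdm_addDir t hadm hσ)

lemma ipr3 (P : Finset (V × V)) (A B C σ : V → V → ℝ) :
    ipr r P (fun u v => A u v - B u v - C u v) σ
      = ipr r P A σ - ipr r P B σ - ipr r P C σ := by
  unfold ipr
  rw [← mul_sub, ← mul_sub, ← Finset.sum_sub_distrib, ← Finset.sum_sub_distrib]
  congr 1
  apply Finset.sum_congr rfl; intros; ring

/-- the difference of free (cut) and wired (short) minimizers -/
noncomputable def del (G : SimpleGraph V) [G.LocallyFinite] (r : V → V → ℝ)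
    (S : Finset V) (x y : V) : V → V → ℝ :=
  fun u v => cmin G r S x y u v - smin G r S x y u v

lemma er_del (hr : ∀ u v, G.Adj u v → 0 < r u v) {S : Finset V} {x y : V}
    (hne : ∃ θ, CutAdm G S x y θ) :
    er r (pset G S) (del G r S x y)
      = er r (pset G S) (cmin G r S x y) - er r (pset G S) (smin G r S x y) := by
  have hneS : ∃ θ, ShortAdm G S x y θ := hne.imp fun θ h => cutAdm_short G h
  have hCadm := (cmin_spec hr hne).1
  have hSadm := (smin_spec hr hneS).1
  have hdir : ShortDir G S (del G r S x y) :=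
    shortAdm_sub (cutAdm_short G hCadm) hSadm
  have horto : ipr r (pset G S) (smin G r S x y) (del G r S x y) = 0 :=
    smin_ortho hr hneS hdir
  have hfun : cmin G r S x y
      = fun u v => smin G r S x y u v + (1:ℝ) * del G r S x y u v := by
    funext u v; unfold del; ring
  have := er_expand r (pset G S) (smin G r S x y) (del G r S x y) 1
  rw [← hfun] at this
  rw [horto] at this
  rw [this]; ring

lemma cut_linear (hr : ∀ u v, G.Adj u v → 0 < r u v) {S : Finset V} {x z y : V}
    (hxz : x ≠ z) (hzy : z ≠ y) (hxy : x ≠ y)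
    (hne1 : ∃ θ, CutAdm G S x y θ) (hne2 : ∃ θ, CutAdm G S x z θ)
    (hne3 : ∃ θ, CutAdm G S z y θ) :
    cmin G r S x y = fun u v => cmin G r S x z u v + cmin G r S z y u v := by
  have h1 := (cmin_spec hr hne1).1
  have h2 := (cmin_spec hr hne2).1
  have h3 := (cmin_spec hr hne3).1
  set δ : V → V → ℝ :=
    fun u v => cmin G r S x y u v - cmin G r S x z u v - cmin G r S z y u v with hδ
  have hdir : CutDir G S δ := by
    refine ⟨fun u v => ?_, fun u v h => ?_, fun u v h => ?_, fun v => ?_⟩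
    · show cmin G r S x y u v - cmin G r S x z u v - cmin G r S z y u v
        = -(cmin G r S x y v u - cmin G r S x z v u - cmin G r S z y v u)
      rw [h1.1.1 u v, h2.1.1 u v, h3.1.1 u v]; ring
    · show cmin G r S x y u v - cmin G r S x z u v - cmin G r S z y u v = 0
      rw [h1.1.2 u v h, h2.1.2 u v h, h3.1.2 u v h]; ring
    · show cmin G r S x y u v - cmin G r S x z u v - cmin G r S z y u v = 0
      rw [h1.2.2 u v h, h2.2.2 u v h, h3.2.2 u v h]; ring
    · rw [hδ]
      have e1 : divg G (fun u v => cmin G r S x y u v - cmin G r S x z u v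
          - cmin G r S z y u v) v
          = divg G (fun u v => cmin G r S x y u v - cmin G r S x z u v) v
            - divg G (cmin G r S z y) v := divg_sub G _ _ v
      have e2 : divg G (fun u v => cmin G r S x y u v - cmin G r S x z u v) v
          = divg G (cmin G r S x y) v - divg G (cmin G r S x z) v := divg_sub G _ _ v
      rw [e1, e2, congrFun h1.2.1 v, congrFun h2.2.1 v, congrFun h3.2.1 v]
      have := pointSource_add hxz hzy hxy v
      linarith
  have hz : er r (pset G S) δ = 0 := by
    have e0 := ipr3 (r := r) (pset G S) (cmin G r S x y) (cmin G r S x z) (cmin G r S z y) δ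
    have e1 : er r (pset G S) δ = ipr r (pset G S)
        (fun u v => cmin G r S x y u v - cmin G r S x z u v - cmin G r S z y u v) δ := rfl
    rw [e1, e0, cmin_ortho hr hne1 hdir, cmin_ortho hr hne2 hdir,
      cmin_ortho hr hne3 hdir]
    ring
  have hsup : ∀ u v, (u, v) ∉ pset G S → δ u v = 0 := sup_pset hdir.2.1
    (fun u v hu hv => hdir.2.2.1 u v (Or.inl hu))
  have := er_eq_zero r (pset G S) (fun p hp => hr _ _ (pset_adj G hp)) δ hsup hz
  funext u v
  have h0 := congrFun (congrFun this u) v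
  rw [hδ] at h0
  simp only at h0
  linarith

lemma short_linear (hr : ∀ u v, G.Adj u v → 0 < r u v) {S : Finset V} {x z y : V}
    (hxz : x ≠ z) (hzy : z ≠ y) (hxy : x ≠ y)
    (hne1 : ∃ θ, ShortAdm G S x y θ) (hne2 : ∃ θ, ShortAdm G S x z θ)
    (hne3 : ∃ θ, ShortAdm G S z y θ) :
    smin G r S x y = fun u v => smin G r S x z u v + smin G r S z y u v := by
  have h1 := (smin_spec hr hne1).1
  have h2 := (smin_spec hr hne2).1
  have h3 := (smin_spec hr hne3).1
  set δ : V → V → ℝ :=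
    fun u v => smin G r S x y u v - smin G r S x z u v - smin G r S z y u v with hδ
  have hdir : ShortDir G S δ := by
    refine ⟨fun u v => ?_, fun u v h => ?_, fun u v hu hv => ?_, fun v hv => ?_⟩
    · show smin G r S x y u v - smin G r S x z u v - smin G r S z y u v
        = -(smin G r S x y v u - smin G r S x z v u - smin G r S z y v u)
      rw [h1.1 u v, h2.1 u v, h3.1 u v]; ring
    · show smin G r S x y u v - smin G r S x z u v - smin G r S z y u v = 0
      rw [h1.2.1 u v h, h2.2.1 u v h, h3.2.1 u v h]; ring
    · show smin G r S x y u v - smin G r S x z u v - smin G r S z y u v = 0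
      rw [h1.2.2.1 u v hu hv, h2.2.2.1 u v hu hv, h3.2.2.1 u v hu hv]; ring
    · rw [hδ]
      have e1 : divg G (fun u v => smin G r S x y u v - smin G r S x z u v
          - smin G r S z y u v) v
          = divg G (fun u v => smin G r S x y u v - smin G r S x z u v) v
            - divg G (smin G r S z y) v := divg_sub G _ _ v
      have e2 : divg G (fun u v => smin G r S x y u v - smin G r S x z u v) v
          = divg G (smin G r S x y) v - divg G (smin G r S x z) v := divg_sub G _ _ v
      rw [e1, e2, h1.2.2.2 v hv, h2.2.2.2 v hv, h3.2.2.2 v hv]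
      have := pointSource_add hxz hzy hxy v
      linarith
  have hz : er r (pset G S) δ = 0 := by
    have e0 := ipr3 (r := r) (pset G S) (smin G r S x y) (smin G r S x z) (smin G r S z y) δ
    have e1 : er r (pset G S) δ = ipr r (pset G S)
        (fun u v => smin G r S x y u v - smin G r S x z u v - smin G r S z y u v) δ := rfl
    rw [e1, e0, smin_ortho hr hne1 hdir, smin_ortho hr hne2 hdir,
      smin_ortho hr hne3 hdir]
    ring
  have hsup : ∀ u v, (u, v) ∉ pset G S → δ u v = 0 :=
    sup_pset hdir.2.1 hdir.2.2.1
  have := er_eq_zero r (pset G S) (fun p hp => hr _ _ (pset_adj G hp)) δ hsup hz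
  funext u v
  have h0 := congrFun (congrFun this u) v
  rw [hδ] at h0
  simp only at h0
  linarith

end Key


section Exhaust

variable (G : SimpleGraph V) [G.LocallyFinite]

noncomputable def ball (x : V) : ℕ → Finset V
  | 0 => {x}
  | n + 1 => nb G (ball x n)

lemma subset_nb (S : Finset V) : S ⊆ nb G S := by
  classical
  intro a ha
  exact Finset.mem_union.2 (Or.inl ha)

lemma ball_mono_succ (x : V) (n : ℕ) : ball G x n ⊆ ball G x (n + 1) :=
  subset_nb G _

lemma ball_mono (x : V) {m n : ℕ} (h : m ≤ n) : ball G x m ⊆ ball G x n := by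
  induction n with
  | zero => simpa [Nat.le_zero.1 h]
  | succ n ih =>
    rcases Nat.lt_or_ge m (n + 1) with h' | h'
    · exact (ih (Nat.lt_succ_iff.1 h')).trans (ball_mono_succ G x n)
    · have : m = n + 1 := le_antisymm h h'
      subst this
      exact subset_rfl

lemma adj_mem_nb {S : Finset V} {u v : V} (hu : u ∈ S) (hadj : G.Adj u v) :
    v ∈ nb G S := by
  classical
  exact Finset.mem_union.2 (Or.inr (Finset.mem_biUnion.2 ⟨u, hu, by simpa using hadj⟩))

lemma ball_cover_walk (x : V) : ∀ {u v : V} (w : G.Walk u v) (n : ℕ),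
    u ∈ ball G x n → v ∈ ball G x (n + w.length) := by
  intro u v w
  induction w with
  | nil => intro n h; simpa using h
  | @cons a c b hadj w ih =>
    intro n h
    have hc : c ∈ ball G x (n + 1) := adj_mem_nb G h hadj
    have := ih (n + 1) hc
    have harith : n + 1 + w.length = n + (SimpleGraph.Walk.cons hadj w).length := by
      simp [SimpleGraph.Walk.length_cons]
      ring
    rwa [harith] at this

lemma ball_cover (hG : G.Preconnected) (x v : V) : ∃ n, v ∈ ball G x n := by
  obtain ⟨w⟩ := hG x v
  exact ⟨w.length, by simpa using ball_cover_walk G x w 0 (by simp [ball])⟩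

end Exhaust

lemma single_le_er {r : V → V → ℝ} (P : Finset (V × V)) (hP : ∀ p ∈ P, 0 ≤ r p.1 p.2)
    (θ : V → V → ℝ) {u v : V} (h : (u, v) ∈ P) :
    2⁻¹ * (r u v * (θ u v * θ u v)) ≤ er r P θ := by
  unfold er ipr
  rw [Finset.mul_sum]
  exact Finset.single_le_sum (f := fun p => 2⁻¹ * (r p.1 p.2 * (θ p.1 p.2 * θ p.1 p.2)))
    (fun q hq => by have := hP q hq; nlinarith [mul_self_nonneg (θ q.1 q.2)]) h

section Wired

variable {G : SimpleGraph V} [G.LocallyFinite] {r : V → V → ℝ}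

lemma oddRes_le_iSup_shortRes (hG : G.Connected) (hr : ∀ u v, G.Adj u v → 0 < r u v)
    {x y : V} (hxy : x ≠ y) :
    oddRes G r x y ≤ ⨆ S : Finset V, shortRes G r x y S := by
  classical
  set σ := ⨆ S : Finset V, shortRes G r x y S with hσ
  by_cases htop : σ = ⊤
  · rw [htop]; exact le_top
  set L := σ.toReal with hL
  -- base path
  obtain ⟨w0'⟩ := hG.preconnected x y
  set w1 : G.Walk x y := (w0'.toPath : G.Path x y).1 with hw1
  have hw1p : w1.IsPath := (w0'.toPath).2
  set B : Finset V := w1.support.toFinset with hB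
  -- selection of good finite sets
  have hsel : ∀ n : ℕ, ∃ S : Finset V, σ ≤ shortRes G r x y S + ENNReal.ofReal (1 / (n + 1)) := by
    intro n
    by_cases hzero : σ = 0
    · exact ⟨∅, by rw [hzero]; exact zero_le⟩
    · have hlt : σ - ENNReal.ofReal (1 / (n + 1)) < σ :=
        ENNReal.sub_lt_self htop hzero (by positivity)
      rw [hσ] at hlt
      obtain ⟨S, hS⟩ := lt_iSup_iff.1 (lt_of_lt_of_le (hσ ▸ hlt) le_rfl)
      refine ⟨S, ?_⟩
      have := tsub_le_iff_right.1 hS.le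
      exact this
  choose S' hS' using hsel
  -- the exhausting sequence
  set T : ℕ → Finset V := fun n => (ball G x n ∪ B) ∪ (Finset.range (n + 1)).sup S' with hT
  have hTmono : ∀ {m n : ℕ}, m ≤ n → T m ⊆ T n := by
    intro m n hmn
    refine Finset.union_subset_union
      (Finset.union_subset_union (ball_mono G x hmn) subset_rfl)
      (Finset.sup_mono (Finset.range_subset_range.2 (Nat.succ_le_succ hmn)))
  have hTB : ∀ n, B ⊆ T n := fun n =>
    (Finset.subset_union_right).trans Finset.subset_union_left
  have hTS' : ∀ n, S' n ⊆ T n := by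
    intro n
    refine le_trans ?_ Finset.subset_union_right
    exact Finset.le_sup (by simp)
  have hTball : ∀ n, ball G x n ⊆ T n := fun n =>
    Finset.Subset.trans Finset.subset_union_left Finset.subset_union_left
  -- nonemptiness of the admissible classes
  have hsubB : ∀ a ∈ w1.support, a ∈ B := by
    intro a ha; rw [hB]; simpa using ha
  have hneT : ∀ n, ∃ θ, ShortAdm G (T n) x y θ := by
    intro n
    exact ⟨wflow G w1, cutAdm_short G
      (wflow_cutAdm w1 hw1p hxy (fun a ha => hTB n (hsubB a ha)))⟩
  -- the minimizers
  set θf : ℕ → V → V → ℝ := fun n => smin G r (T n) x y with hθf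
  have hadm : ∀ n, ShortAdm G (T n) x y (θf n) := fun n => (smin_spec hr (hneT n)).1
  have hminim : ∀ n, ∀ φ, ShortAdm G (T n) x y φ →
      er r (pset G (T n)) (θf n) ≤ er r (pset G (T n)) φ :=
    fun n => (smin_spec hr (hneT n)).2
  set s : ℕ → ℝ := fun n => er r (pset G (T n)) (θf n) with hs
  have hval : ∀ n, shortRes G r x y (T n) = ENNReal.ofReal (s n) :=
    fun n => shortRes_val hr (hneT n)
  have hs_nonneg : ∀ n, 0 ≤ s n := fun n =>
    er_nonneg r _ (pset_nonneg hr _) _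
  have hsL : ∀ n, s n ≤ L := by
    intro n
    have h1 : shortRes G r x y (T n) ≤ σ := le_iSup (fun S => shortRes G r x y S) (T n)
    rw [hval n] at h1
    exact (ENNReal.ofReal_le_iff_le_toReal htop).1 h1
  have hLs : ∀ m, L ≤ s m + 1 / (m + 1) := by
    intro m
    have h1 : σ ≤ shortRes G r x y (T m) + ENNReal.ofReal (1 / (m + 1)) :=
      (hS' m).trans (add_le_add_left (shortRes_mono x y (hTS' m)) _)
    rw [hval m, ← ENNReal.ofReal_add (hs_nonneg m) (by positivity)] at h1
    calc L = σ.toReal := rfl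
      _ ≤ (ENNReal.ofReal (s m + 1 / (m + 1))).toReal :=
          ENNReal.toReal_mono ENNReal.ofReal_ne_top h1
      _ ≤ s m + 1 / (m + 1) := le_of_eq (ENNReal.toReal_ofReal (by have := hs_nonneg m; positivity))
  -- the key gap estimate
  have hgap : ∀ {m n : ℕ}, m ≤ n →
      er r (pset G (T m)) (fun u v => restr (T m) (θf n) u v - θf m u v) ≤ s n - s m := by
    intro m n hmn
    set ρ := restr (T m) (θf n) with hρ
    have hρadm : ShortAdm G (T m) x y ρ := restr_shortAdm (hTmono hmn) (hadm n)
    have hortho : ipr r (pset G (T m)) (θf m) (fun u v => ρ u v - θf m u v) = 0 :=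
      smin_ortho hr (hneT m) (shortAdm_sub hρadm (hadm m))
    have hfun : ρ = fun u v => θf m u v + (1:ℝ) * (ρ u v - θf m u v) := by
      funext u v; ring
    have hexp := er_expand r (pset G (T m)) (θf m) (fun u v => ρ u v - θf m u v) 1
    rw [← hfun, hortho] at hexp
    -- er_Pm ρ = er_Pn ρ ≤ s n
    have hρsup : ∀ u v, (u, v) ∉ pset G (T m) → ρ u v = 0 := shortAdm_sup G hρadm
    have he1 : er r (pset G (T n)) ρ = er r (pset G (T m)) ρ :=
      er_subset r (pset_mono G (hTmono hmn)) ρ hρsup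
    have he2 : er r (pset G (T n)) ρ ≤ s n := by
      rw [hρ]
      exact er_restr_le r (pset G (T n)) (pset_nonneg hr _) (T m) (θf n)
    have hmin_m : s m ≤ er r (pset G (T m)) ρ := hminim m ρ hρadm
    have hsm : s m = er r (pset G (T m)) (θf m) := rfl
    have her : er r (pset G (T m)) (fun u v => ρ u v - θf m u v)
        = er r (pset G (T m)) ρ - s m := by
      rw [hsm]; linarith [hexp]
    rw [her, ← he1]
    linarith
  -- coordinate Cauchy bound
  have hcoord : ∀ {u v : V}, G.Adj u v → ∀ {N m n : ℕ}, u ∈ ball G x N → N ≤ m → m ≤ n →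
      |θf n u v - θf m u v| ≤ Real.sqrt (2 / r u v * (1 / (m + 1))) := by
    intro u v hadj' N m n huN hNm hmn
    have hrpos := hr u v hadj'
    have huTm : u ∈ T m := hTball m (ball_mono G x hNm huN)
    have hpm : (u, v) ∈ pset G (T m) := mem_pset G hadj' (Or.inl huTm)
    have hkeep : restr (T m) (θf n) u v = θf n u v := by
      unfold restr; rw [if_pos (Or.inl huTm)]
    have hterm := single_le_er (pset G (T m)) (pset_nonneg hr _)
      (fun u' v' => restr (T m) (θf n) u' v' - θf m u' v') hpm
    have hgap' := hgap hmn
    have hub : s n - s m ≤ 1 / (m + 1) := by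
      have := hsL n
      have := hLs m
      linarith
    have hd2 : (θf n u v - θf m u v) * (θf n u v - θf m u v)
        ≤ 2 / r u v * (1 / (m + 1)) := by
      have hbeta : (fun u' v' => restr (T m) (θf n) u' v' - θf m u' v') u v
          = θf n u v - θf m u v := by
        beta_reduce; rw [hkeep]
      rw [hkeep] at hterm
      rw [div_mul_eq_mul_div, le_div_iff₀ hrpos]
      nlinarith
    calc |θf n u v - θf m u v|
        = Real.sqrt ((θf n u v - θf m u v) * (θf n u v - θf m u v)) :=
          (Real.sqrt_mul_self_eq_abs _).symm
      _ ≤ Real.sqrt (2 / r u v * (1 / (m + 1))) := Real.sqrt_le_sqrt hd2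
  -- convergence of coordinates
  have hconv : ∀ u v : V, ∃ Lv : ℝ, Tendsto (fun n => θf n u v) atTop (nhds Lv) := by
    intro u v
    by_cases hadj' : G.Adj u v
    · obtain ⟨N, huN⟩ := ball_cover G hG.preconnected x u
      apply cauchySeq_tendsto_of_complete
      rw [Metric.cauchySeq_iff']
      intro ε hε
      have hrpos := hr u v hadj'
      obtain ⟨K, hK⟩ := exists_nat_gt ((2 / r u v) / ε ^ 2)
      refine ⟨max N K, fun n hn => ?_⟩
      have h1 := hcoord hadj' (N := N) (m := max N K) (n := n) huN (le_max_left N K) hn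
      have h2 : 2 / r u v * (1 / ((max N K : ℕ) + 1 : ℝ)) < ε ^ 2 := by
        have hcast : (K : ℝ) ≤ ((max N K : ℕ) : ℝ) := by
          exact_mod_cast Nat.le_max_right N K
        have hKM : 2 / r u v / ε ^ 2 < ((max N K : ℕ) : ℝ) + 1 := by linarith
        have hε2 : (0:ℝ) < ε ^ 2 := by positivity
        have hpos : (0:ℝ) < ((max N K : ℕ) : ℝ) + 1 := by positivity
        have h4 : 2 / r u v < (((max N K : ℕ) : ℝ) + 1) * ε ^ 2 := (div_lt_iff₀ hε2).1 hKM
        rw [mul_one_div, div_lt_iff₀ hpos]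
        nlinarith
      rw [Real.dist_eq]
      calc |θf n u v - θf (max N K) u v|
          ≤ Real.sqrt (2 / r u v * (1 / (max N K + 1))) := h1
        _ < ε := by
            have hlt := Real.sqrt_lt_sqrt (by positivity) h2
            rwa [Real.sqrt_sq hε.le] at hlt
    · refine ⟨0, ?_⟩
      have hzero : (fun n => θf n u v) = fun _ => (0:ℝ) :=
        funext fun n => (hadm n).2.1 u v hadj'
      rw [hzero]
      exact tendsto_const_nhds
  choose Θ hΘ using hconv
  -- the limit is a unit flow
  have hΘflow : IsFlow G Θ := by
    constructor
    · intro u v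
      have h2 : Tendsto (fun n => θf n u v) atTop (nhds (-Θ v u)) :=
        ((hΘ v u).neg).congr fun n => ((hadm n).1 u v).symm
      exact tendsto_nhds_unique (hΘ u v) h2
    · intro u v hna
      have hzero : (fun n => θf n u v) = fun _ => (0:ℝ) :=
        funext fun n => (hadm n).2.1 u v hna
      have h2 : Tendsto (fun n => θf n u v) atTop (nhds 0) := by
        rw [hzero]; exact tendsto_const_nhds
      exact tendsto_nhds_unique (hΘ u v) h2
  have hΘdiv : divg G Θ = pointSource x y := by
    funext v
    obtain ⟨N, hvN⟩ := ball_cover G hG.preconnected x v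
    have h1 : Tendsto (fun n => divg G (θf n) v) atTop (nhds (divg G Θ v)) := by
      unfold divg
      exact tendsto_finset_sum _ fun u _ => hΘ v u
    have h3 : Tendsto (fun n => divg G (θf n) v) atTop (nhds (pointSource x y v)) := by
      refine Tendsto.congr' ?_ tendsto_const_nhds
      filter_upwards [eventually_ge_atTop N] with n hn
      exact ((hadm n).2.2.2 v (hTball n (ball_mono G x hn hvN))).symm
    exact tendsto_nhds_unique h1 h3
  -- energy bound
  have hE : energy r Θ ≤ σ := by
    unfold energy
    have htsum : ∑' p : V × V, ENNReal.ofReal (r p.1 p.2 * Θ p.1 p.2 ^ 2) ≤ 2 * σ := by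
      rw [ENNReal.tsum_eq_iSup_sum]
      refine iSup_le fun F => ?_
      set Fa := F.filter (fun p => G.Adj p.1 p.2) with hFa
      have hsplit : ∑ p ∈ F, ENNReal.ofReal (r p.1 p.2 * Θ p.1 p.2 ^ 2)
          = ∑ p ∈ Fa, ENNReal.ofReal (r p.1 p.2 * Θ p.1 p.2 ^ 2) := by
        symm
        apply Finset.sum_subset (Finset.filter_subset _ _)
        intro p hp hpn
        have hna : ¬G.Adj p.1 p.2 := by
          by_contra h
          exact hpn (Finset.mem_filter.2 ⟨hp, h⟩)
        rw [hΘflow.2 p.1 p.2 hna]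
        simp
      rw [hsplit]
      have hofsum : ∑ p ∈ Fa, ENNReal.ofReal (r p.1 p.2 * Θ p.1 p.2 ^ 2)
          = ENNReal.ofReal (∑ p ∈ Fa, r p.1 p.2 * Θ p.1 p.2 ^ 2) := by
        rw [ENNReal.ofReal_sum_of_nonneg]
        intro p hp
        have hadj' : G.Adj p.1 p.2 := (Finset.mem_filter.1 hp).2
        have := (hr _ _ hadj').le
        positivity
      rw [hofsum]
      have hlim : Tendsto (fun n => ∑ p ∈ Fa, r p.1 p.2 * θf n p.1 p.2 ^ 2) atTop
          (nhds (∑ p ∈ Fa, r p.1 p.2 * Θ p.1 p.2 ^ 2)) :=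
        tendsto_finset_sum _ fun p _ => ((hΘ p.1 p.2).pow 2).const_mul _
      have hbound : ∀ n, ∑ p ∈ Fa, r p.1 p.2 * θf n p.1 p.2 ^ 2 ≤ 2 * L := by
        intro n
        have h1 : ∑ p ∈ Fa, r p.1 p.2 * θf n p.1 p.2 ^ 2
            = ∑ p ∈ Fa ∩ pset G (T n), r p.1 p.2 * θf n p.1 p.2 ^ 2 := by
          symm
          apply Finset.sum_subset Finset.inter_subset_left
          intro p hp hpn
          have hnotin : (p.1, p.2) ∉ pset G (T n) := by
            intro hmem
            exact hpn (Finset.mem_inter.2 ⟨hp, by simpa using hmem⟩)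
          rw [shortAdm_sup G (hadm n) p.1 p.2 hnotin]
          ring
        have h2 : ∑ p ∈ Fa ∩ pset G (T n), r p.1 p.2 * θf n p.1 p.2 ^ 2
            ≤ ∑ p ∈ pset G (T n), r p.1 p.2 * θf n p.1 p.2 ^ 2 := by
          apply Finset.sum_le_sum_of_subset_of_nonneg Finset.inter_subset_right
          intro p hp _
          have := (hr _ _ (pset_adj G hp)).le
          positivity
        have h3 : ∑ p ∈ pset G (T n), r p.1 p.2 * θf n p.1 p.2 ^ 2 = 2 * s n := by
          have hsq : ∑ p ∈ pset G (T n), r p.1 p.2 * θf n p.1 p.2 ^ 2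
              = ∑ p ∈ pset G (T n), r p.1 p.2 * (θf n p.1 p.2 * θf n p.1 p.2) :=
            Finset.sum_congr rfl (by intros; ring)
          have hsn : s n = 2⁻¹ * ∑ p ∈ pset G (T n),
              r p.1 p.2 * (θf n p.1 p.2 * θf n p.1 p.2) := rfl
          rw [hsq, hsn]
          ring
        rw [h1]
        calc ∑ p ∈ Fa ∩ pset G (T n), r p.1 p.2 * θf n p.1 p.2 ^ 2
            ≤ ∑ p ∈ pset G (T n), r p.1 p.2 * θf n p.1 p.2 ^ 2 := h2
          _ = 2 * s n := h3
          _ ≤ 2 * L := by have := hsL n; linarith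
      have hreal : ∑ p ∈ Fa, r p.1 p.2 * Θ p.1 p.2 ^ 2 ≤ 2 * L :=
        le_of_tendsto hlim (Eventually.of_forall hbound)
      calc ENNReal.ofReal (∑ p ∈ Fa, r p.1 p.2 * Θ p.1 p.2 ^ 2)
          ≤ ENNReal.ofReal (2 * L) := ENNReal.ofReal_le_ofReal hreal
        _ ≤ 2 * σ := by
            rw [ENNReal.ofReal_mul (by norm_num : (0:ℝ) ≤ 2)]
            have h5 : ENNReal.ofReal L ≤ σ := by
              rw [hL]
              exact ENNReal.ofReal_toReal_le
            have h6 : ENNReal.ofReal (2:ℝ) = (2 : ℝ≥0∞) := by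
              norm_num
            rw [h6]
            exact mul_le_mul_right h5 _
    calc 2⁻¹ * ∑' p : V × V, ENNReal.ofReal (r p.1 p.2 * Θ p.1 p.2 ^ 2)
        ≤ 2⁻¹ * (2 * σ) := mul_le_mul_right htsum _
      _ = σ := by
          rw [← mul_assoc, ENNReal.inv_mul_cancel (by norm_num) (by norm_num), one_mul]
  have hEne : energy r Θ ≠ ⊤ := ne_top_of_le_ne_top htop hE
  unfold oddRes
  exact le_trans (iInf_le_of_le Θ (iInf_le_of_le ⟨hΘflow, hEne, hΘdiv⟩ le_rfl)) hE

end Wired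



section Decomp

variable {G : SimpleGraph V} [G.LocallyFinite] {r : V → V → ℝ}

lemma edge_cutAdm {S : Finset V} {a b : V} (hadj : G.Adj a b) (ha : a ∈ S) (hb : b ∈ S) :
    CutAdm G S a b (eflow a b) := by
  refine ⟨⟨eflow_antisymm a b hadj.ne, fun u v h => eflow_off hadj h⟩,
    divg_eflow G a b hadj, ?_⟩
  intro u v h
  by_contra hne
  rcases eflow_support hne with ⟨rfl, rfl⟩ | ⟨rfl, rfl⟩
  · tauto
  · tauto

lemma key_decomp (hr : ∀ u v, G.Adj u v → 0 < r u v) {S : Finset V} :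
    ∀ {a b : V} (w : G.Walk a b), w.IsPath → a ≠ b → (∀ z ∈ w.support, z ∈ S) →
    Real.sqrt (er r (pset G S) (del G r S a b))
      ≤ (w.darts.map fun d =>
          Real.sqrt (er r (pset G S) (del G r S d.fst d.snd))).sum := by
  intro a b w
  induction w with
  | nil => intro _ hab _; exact absurd rfl hab
  | @cons a c b hadj w ih =>
    intro hw hab hsub
    by_cases hcb : c = b
    · subst hcb
      have hnil : w = SimpleGraph.Walk.nil :=
        SimpleGraph.Walk.isPath_iff_eq_nil.1 hw.of_cons
      subst hnil
      simp only [SimpleGraph.Walk.darts_cons, SimpleGraph.Walk.darts_nil,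
        List.map_cons, List.map_nil, List.sum_cons, List.sum_nil, add_zero]
      exact le_refl _
    · have hw' := hw.of_cons
      have hac : a ≠ c := hadj.ne
      have hsub' : ∀ z ∈ w.support, z ∈ S := fun z hz => hsub z
        (by rw [SimpleGraph.Walk.support_cons]; exact List.mem_cons_of_mem _ hz)
      have haS : a ∈ S := hsub a (SimpleGraph.Walk.start_mem_support _)
      have hcS : c ∈ S := hsub' c (SimpleGraph.Walk.start_mem_support _)
      have hbS : b ∈ S := hsub' b (SimpleGraph.Walk.end_mem_support _)
      have hne1 : ∃ θ, CutAdm G S a b θ :=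
        ⟨wflow G (SimpleGraph.Walk.cons hadj w), wflow_cutAdm _ hw hab hsub⟩
      have hne2 : ∃ θ, CutAdm G S a c θ := ⟨eflow a c, edge_cutAdm hadj haS hcS⟩
      have hne3 : ∃ θ, CutAdm G S c b θ := ⟨wflow G w, wflow_cutAdm w hw' hcb hsub'⟩
      have hlinC := cut_linear hr hac hcb hab hne1 hne2 hne3
      have hlinS := short_linear hr hac hcb hab
        (hne1.imp fun θ h => cutAdm_short G h)
        (hne2.imp fun θ h => cutAdm_short G h)
        (hne3.imp fun θ h => cutAdm_short G h)
      have hdel : del G r S a b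
          = fun u v => del G r S a c u v + del G r S c b u v := by
        funext u v
        have h1 : cmin G r S a b u v = cmin G r S a c u v + cmin G r S c b u v := by
          rw [hlinC]
        have h2 : smin G r S a b u v = smin G r S a c u v + smin G r S c b u v := by
          rw [hlinS]
        unfold del
        rw [h1, h2]
        ring
      calc Real.sqrt (er r (pset G S) (del G r S a b))
          = Real.sqrt (er r (pset G S)
              (fun u v => del G r S a c u v + del G r S c b u v)) := by rw [hdel]
        _ ≤ Real.sqrt (er r (pset G S) (del G r S a c))
            + Real.sqrt (er r (pset G S) (del G r S c b)) :=
            sqrt_er_add_le r (pset G S) (pset_nonneg hr S) _ _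
        _ ≤ Real.sqrt (er r (pset G S) (del G r S a c))
            + (w.darts.map fun d =>
                Real.sqrt (er r (pset G S) (del G r S d.fst d.snd))).sum := by
            have := ih hw' hcb hsub'
            linarith
        _ = ((SimpleGraph.Walk.cons hadj w).darts.map fun d =>
              Real.sqrt (er r (pset G S) (del G r S d.fst d.snd))).sum := by
            rw [SimpleGraph.Walk.darts_cons, List.map_cons, List.sum_cons]

end Decomp

end APS

open APS in
/-- **Adjacent pairs suffice**: if even and odd resistances agree across every edge,
they agree for every pair of distinct vertices. -/
theorem adjacent_pairs_suffice
    (G : SimpleGraph V) [G.LocallyFinite] (hG : G.Connected)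
    (r : V → V → ℝ) (hr_pos : ∀ u v, G.Adj u v → 0 < r u v)
    (hr_symm : ∀ u v, r u v = r v u)
    (hadj : ∀ p q : V, G.Adj p q → evenRes G r p q = oddRes G r p q) :
    ∀ p q : V, p ≠ q → evenRes G r p q = oddRes G r p q := by
  intro p q hpq
  classical
  obtain ⟨w'⟩ := hG.preconnected p q
  set w1 : G.Walk p q := (w'.toPath : G.Path p q).1 with hw1
  have hw1p : w1.IsPath := w'.toPath.2
  set B : Finset V := w1.support.toFinset with hB
  have hsubB : ∀ z ∈ w1.support, z ∈ B := by intro z hz; rw [hB]; simpa using hz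
  have hpB : p ∈ B := hsubB p (SimpleGraph.Walk.start_mem_support _)
  have hqB : q ∈ B := hsubB q (SimpleGraph.Walk.end_mem_support _)
  -- finiteness of evenRes p q
  have hwadm : CutAdm G B p q (wflow G w1) := wflow_cutAdm w1 hw1p hpq hsubB
  have hen : energy r (wflow G w1) = ENNReal.ofReal (er r (pset G B) (wflow G w1)) :=
    energy_shortAdm hr_pos (cutAdm_short G hwadm)
  have hcutB : cutRes G r p q B ≤ ENNReal.ofReal (er r (pset G B) (wflow G w1)) := by
    rw [cutRes_eq, ← hen]
    exact iInf_le_of_le _ (iInf_le_of_le hwadm le_rfl)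
  have hevenfin : evenRes G r p q ≠ ⊤ :=
    ne_top_of_le_ne_top ENNReal.ofReal_ne_top ((evenRes_le_cutRes hpB hqB).trans hcutB)
  have hoddfin : oddRes G r p q ≠ ⊤ :=
    ne_top_of_le_ne_top hevenfin (oddRes_le_evenRes p q)
  -- finiteness for adjacent pairs
  have hedgefin : ∀ a b : V, G.Adj a b → evenRes G r a b ≠ ⊤ := by
    intro a b hab
    have hmem : a ∈ ({a, b} : Finset V) := by simp
    have hmem' : b ∈ ({a, b} : Finset V) := by simp
    have hadm := edge_cutAdm (G := G) hab hmem hmem'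
    have hen2 : energy r (eflow a b)
        = ENNReal.ofReal (er r (pset G {a, b}) (eflow a b)) :=
      energy_shortAdm hr_pos (cutAdm_short G hadm)
    have h1 : cutRes G r a b {a, b}
        ≤ ENNReal.ofReal (er r (pset G {a, b}) (eflow a b)) := by
      rw [cutRes_eq, ← hen2]
      exact iInf_le_of_le _ (iInf_le_of_le hadm le_rfl)
    exact ne_top_of_le_ne_top ENNReal.ofReal_ne_top
      ((evenRes_le_cutRes hmem hmem').trans h1)
  -- main estimate
  have main : ∀ ε : ℝ, 0 < ε →
      Real.sqrt (evenRes G r p q).toReal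
        ≤ Real.sqrt (oddRes G r p q).toReal
          + (w1.darts.length : ℝ) * Real.sqrt (2 * ε) := by
    intro ε hε
    have hcutsel : ∀ a b : V, G.Adj a b → ∃ S : Finset V, a ∈ S ∧ b ∈ S ∧
        cutRes G r a b S ≤ evenRes G r a b + ENNReal.ofReal ε := by
      intro a b hab
      have hlt : evenRes G r a b < evenRes G r a b + ENNReal.ofReal ε :=
        ENNReal.lt_add_right (hedgefin a b hab)
          (by simp only [ne_eq, ENNReal.ofReal_eq_zero, not_le]; linarith)
      unfold evenRes at hlt
      obtain ⟨S, hS⟩ := iInf_lt_iff.1 hlt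
      obtain ⟨hmem, hS'⟩ := iInf_lt_iff.1 hS
      exact ⟨S, hmem.1, hmem.2, hS'.le⟩
    choose Sc hSc1 hSc2 hSc3 using hcutsel
    have hshortsel : ∀ a b : V, G.Adj a b → ∃ S : Finset V,
        oddRes G r a b ≤ shortRes G r a b S + ENNReal.ofReal ε := by
      intro a b hab
      by_cases hzero : oddRes G r a b = 0
      · exact ⟨∅, by rw [hzero]; exact zero_le⟩
      · have hfin : oddRes G r a b ≠ ⊤ :=
          ne_top_of_le_ne_top (hedgefin a b hab) (oddRes_le_evenRes a b)
        have hlt : oddRes G r a b - ENNReal.ofReal ε < oddRes G r a b :=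
          ENNReal.sub_lt_self hfin hzero
            (by simp only [ne_eq, ENNReal.ofReal_eq_zero, not_le]; linarith)
        have hlt2 : oddRes G r a b - ENNReal.ofReal ε
            < ⨆ S : Finset V, shortRes G r a b S :=
          lt_of_lt_of_le hlt (oddRes_le_iSup_shortRes hG hr_pos hab.ne)
        obtain ⟨S, hS⟩ := lt_iSup_iff.1 hlt2
        exact ⟨S, tsub_le_iff_right.1 hS.le⟩
    choose Ss hSs using hshortsel
    set D : Finset V := w1.darts.toFinset.sup
      (fun d => Sc d.fst d.snd d.adj ∪ Ss d.fst d.snd d.adj) with hD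
    set S : Finset V := B ∪ D with hSdef
    have hBS : B ⊆ S := Finset.subset_union_left
    have hsubS : ∀ z ∈ w1.support, z ∈ S := fun z hz => hBS (hsubB z hz)
    have hDsub : ∀ d ∈ w1.darts,
        Sc d.fst d.snd d.adj ∪ Ss d.fst d.snd d.adj ⊆ S := by
      intro d hd
      refine le_trans ?_ (Finset.subset_union_right (s₁ := B))
      exact Finset.le_sup (f := fun d : G.Dart => Sc d.fst d.snd d.adj ∪ Ss d.fst d.snd d.adj)
        (List.mem_toFinset.2 hd)
    have hneC : ∃ θ, CutAdm G S p q θ := ⟨wflow G w1, wflow_cutAdm w1 hw1p hpq hsubS⟩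
    have hneS : ∃ θ, ShortAdm G S p q θ := hneC.imp fun θ h => cutAdm_short G h
    have hcutval : cutRes G r p q S
        = ENNReal.ofReal (er r (pset G S) (cmin G r S p q)) := cutRes_val hr_pos hneC
    have hshortval : shortRes G r p q S
        = ENNReal.ofReal (er r (pset G S) (smin G r S p q)) := shortRes_val hr_pos hneS
    have h1 : (evenRes G r p q).toReal ≤ er r (pset G S) (cmin G r S p q) := by
      have hle := evenRes_le_cutRes (G := G) (r := r)
        (hsubS p (SimpleGraph.Walk.start_mem_support _))
        (hsubS q (SimpleGraph.Walk.end_mem_support _))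
      rw [hcutval] at hle
      calc (evenRes G r p q).toReal
          ≤ (ENNReal.ofReal (er r (pset G S) (cmin G r S p q))).toReal :=
            ENNReal.toReal_mono ENNReal.ofReal_ne_top hle
        _ ≤ er r (pset G S) (cmin G r S p q) :=
            le_of_eq (ENNReal.toReal_ofReal (er_nonneg r _ (pset_nonneg hr_pos S) _))
    have h2 : er r (pset G S) (smin G r S p q) ≤ (oddRes G r p q).toReal := by
      have hle := shortRes_le_oddRes (G := G) (r := r) p q S
      rw [hshortval] at hle
      exact (ENNReal.ofReal_le_iff_le_toReal hoddfin).1 hle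
    have h3 : Real.sqrt (er r (pset G S) (cmin G r S p q))
        ≤ Real.sqrt (er r (pset G S) (smin G r S p q))
          + Real.sqrt (er r (pset G S) (del G r S p q)) := by
      have hfun : cmin G r S p q
          = fun u v => smin G r S p q u v + del G r S p q u v := by
        funext u v; unfold del; ring
      rw [hfun]
      exact sqrt_er_add_le r (pset G S) (pset_nonneg hr_pos S) _ _
    have h4 := key_decomp hr_pos w1 hw1p hpq hsubS
    have h5 : ∀ d ∈ w1.darts,
        Real.sqrt (er r (pset G S) (del G r S d.fst d.snd)) ≤ Real.sqrt (2 * ε) := by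
      intro d hd
      have hab : G.Adj d.fst d.snd := d.adj
      have hfS : d.fst ∈ S := hsubS _ (w1.dart_fst_mem_support_of_mem_darts hd)
      have hsS : d.snd ∈ S := hsubS _ (w1.dart_snd_mem_support_of_mem_darts hd)
      have hneCd : ∃ θ, CutAdm G S d.fst d.snd θ := ⟨eflow _ _, edge_cutAdm hab hfS hsS⟩
      have hneSd : ∃ θ, ShortAdm G S d.fst d.snd θ :=
        hneCd.imp fun θ h => cutAdm_short G h
      have hdelval := er_del hr_pos hneCd
      have hcutd : er r (pset G S) (cmin G r S d.fst d.snd)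
          ≤ (evenRes G r d.fst d.snd).toReal + ε := by
        have hv := cutRes_val hr_pos hneCd
        have hc1 : cutRes G r d.fst d.snd S ≤ cutRes G r d.fst d.snd (Sc d.fst d.snd d.adj) :=
          cutRes_anti _ _ ((Finset.subset_union_left).trans (hDsub d hd))
        have hc2 := hc1.trans (hSc3 d.fst d.snd d.adj)
        rw [hv] at hc2
        have hfin2 : evenRes G r d.fst d.snd + ENNReal.ofReal ε ≠ ⊤ :=
          ENNReal.add_ne_top.2 ⟨hedgefin _ _ hab, ENNReal.ofReal_ne_top⟩
        have h6 := (ENNReal.ofReal_le_iff_le_toReal hfin2).1 hc2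
        calc er r (pset G S) (cmin G r S d.fst d.snd)
            ≤ (evenRes G r d.fst d.snd + ENNReal.ofReal ε).toReal := h6
          _ = (evenRes G r d.fst d.snd).toReal + ε := by
              rw [ENNReal.toReal_add (hedgefin _ _ hab) ENNReal.ofReal_ne_top,
                ENNReal.toReal_ofReal hε.le]
      have hshortd : (oddRes G r d.fst d.snd).toReal - ε
          ≤ er r (pset G S) (smin G r S d.fst d.snd) := by
        have hv := shortRes_val hr_pos hneSd
        have hs1 : shortRes G r d.fst d.snd (Ss d.fst d.snd d.adj)
            ≤ shortRes G r d.fst d.snd S :=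
          shortRes_mono _ _ ((Finset.subset_union_right).trans (hDsub d hd))
        have hs2 := (hSs d.fst d.snd d.adj).trans (add_le_add_left hs1 _)
        rw [hv, ← ENNReal.ofReal_add
          (er_nonneg r _ (pset_nonneg hr_pos S) _) hε.le] at hs2
        have h7 : (oddRes G r d.fst d.snd).toReal
            ≤ er r (pset G S) (smin G r S d.fst d.snd) + ε := by
          calc (oddRes G r d.fst d.snd).toReal
              ≤ (ENNReal.ofReal (er r (pset G S) (smin G r S d.fst d.snd) + ε)).toReal :=
                ENNReal.toReal_mono ENNReal.ofReal_ne_top hs2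
            _ = er r (pset G S) (smin G r S d.fst d.snd) + ε := by
                rw [ENNReal.toReal_ofReal]
                have := er_nonneg r (pset G S) (pset_nonneg hr_pos S)
                  (smin G r S d.fst d.snd)
                linarith
        linarith
      have heqv : (evenRes G r d.fst d.snd).toReal
          = (oddRes G r d.fst d.snd).toReal := by rw [hadj _ _ hab]
      have hbound : er r (pset G S) (del G r S d.fst d.snd) ≤ 2 * ε := by
        rw [hdelval]; linarith
      exact Real.sqrt_le_sqrt hbound |>.trans (le_of_eq rfl)
    have h6 : (w1.darts.map fun d =>
        Real.sqrt (er r (pset G S) (del G r S d.fst d.snd))).sum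
          ≤ (w1.darts.length : ℝ) * Real.sqrt (2 * ε) := by
      have h7 := List.sum_le_card_nsmul
        (w1.darts.map fun d => Real.sqrt (er r (pset G S) (del G r S d.fst d.snd)))
        (Real.sqrt (2 * ε))
        (by intro xx hx
            obtain ⟨d, hd, rfl⟩ := List.mem_map.1 hx
            exact h5 d hd)
      simpa [List.length_map, nsmul_eq_mul] using h7
    have hsq1 : Real.sqrt (evenRes G r p q).toReal
        ≤ Real.sqrt (er r (pset G S) (cmin G r S p q)) := Real.sqrt_le_sqrt h1
    have hsq2 : Real.sqrt (er r (pset G S) (smin G r S p q))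
        ≤ Real.sqrt (oddRes G r p q).toReal := Real.sqrt_le_sqrt h2
    have h8 := h4.trans h6
    linarith
  -- conclude
  have hle : Real.sqrt (evenRes G r p q).toReal
      ≤ Real.sqrt (oddRes G r p q).toReal := by
    apply le_of_forall_pos_le_add
    intro δ hδ
    set n : ℝ := (w1.darts.length : ℝ) with hn
    have hn0 : (0:ℝ) ≤ n := Nat.cast_nonneg _
    have hpos : (0:ℝ) < n + 1 := by linarith
    set ε := δ ^ 2 / (2 * (n + 1) ^ 2) with hε
    have hεpos : 0 < ε := by positivity
    have hmain := main ε hεpos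
    have hsqrt : Real.sqrt (2 * ε) = δ / (n + 1) := by
      rw [hε]
      have heq : 2 * (δ ^ 2 / (2 * (n + 1) ^ 2)) = (δ / (n + 1)) ^ 2 := by
        field_simp
      rw [heq, Real.sqrt_sq (by positivity)]
    rw [hsqrt] at hmain
    have h9 : n * (δ / (n + 1)) ≤ δ := by
      rw [mul_div_assoc', div_le_iff₀ hpos]
      nlinarith
    linarith
  have hto : (evenRes G r p q).toReal ≤ (oddRes G r p q).toReal := by
    have he := Real.sq_sqrt (ENNReal.toReal_nonneg (a := evenRes G r p q))
    have ho := Real.sq_sqrt (ENNReal.toReal_nonneg (a := oddRes G r p q))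
    nlinarith [hle, Real.sqrt_nonneg (evenRes G r p q).toReal,
      Real.sqrt_nonneg (oddRes G r p q).toReal]
  exact le_antisymm ((ENNReal.toReal_le_toReal hevenfin hoddfin).1 hto)
    (oddRes_le_evenRes p q)
end

section
/- Recurrence of the 1-grid and 2-grid: Let d ∈ {1, 2}. Then the d-grid admits no finite-energy flow out to infinity; that is, every flow θ on the d-grid of finite energy whose divergence is nonnegative at every vertex has divergence equal to 0 at every vertex. -/
open scoped ENNReal
open Filter

variable {V : Type*}

/-- The `d`-grid: vertices are the points of `ℤ^d`, with an edge between two points at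
`ℓ¹`-distance `1`. -/
def gridGraph (d : ℕ) : SimpleGraph (Fin d → ℤ) where
  Adj p q := ∑ i, |p i - q i| = 1
  symm := by
    refine ⟨fun p q h => ?_⟩
    rw [← h]
    exact Finset.sum_congr rfl fun i _ => abs_sub_comm (q i) (p i)
  loopless := by
    refine ⟨fun p h => ?_⟩
    simp only [sub_self, abs_zero, Finset.sum_const_zero] at h
    exact absurd h (by norm_num)

noncomputable instance gridGraph.locallyFinite (d : ℕ) : (gridGraph d).LocallyFinite := by
  intro v
  apply Set.Finite.fintype
  have hsub : (gridGraph d).neighborSet v ⊆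
      Set.pi Set.univ fun i => Set.Icc (v i - 1) (v i + 1) := by
    intro w hw
    have hsum : ∑ i, |v i - w i| = 1 := hw
    rw [Set.mem_pi]
    intro i _
    have hle : |v i - w i| ≤ 1 := by
      calc |v i - w i| ≤ ∑ j, |v j - w j| :=
            Finset.single_le_sum (f := fun j => |v j - w j|) (fun j _ => abs_nonneg _) (Finset.mem_univ i)
        _ = 1 := hsum
    obtain ⟨h1, h2⟩ := abs_le.mp hle
    exact ⟨by linarith, by linarith⟩
  exact (Set.Finite.pi fun i => Set.finite_Icc _ _).subset hsub


/-!
Nash-Williams' criterion with the boundaries of the cubes `[-n, n]^d` as cutsets. A flow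
whose divergence is nonnegative and positive somewhere carries a net flux `δ > 0` across
the boundary of every large cube; by Cauchy–Schwarz a cut of `k` edges carrying flux `δ`
costs energy at least `δ² / k`. For `d ≤ 2` the boundary of the `n`-th cube has `O(n)`
edges, and these cuts are disjoint, so the energy dominates a multiple of the harmonic
series.
-/

open Finset Function

section EdgeBoundary

variable (G : SimpleGraph V) [G.LocallyFinite]

open Classical in
noncomputable def edgeBoundary (S : Finset V) : Finset (V × V) :=
  (S ×ˢ S.biUnion fun v => G.neighborFinset v).filter fun p => G.Adj p.1 p.2 ∧ p.2 ∉ S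

variable {G}

theorem mem_edgeBoundary {S : Finset V} {p : V × V} :
    p ∈ edgeBoundary G S ↔ p.1 ∈ S ∧ G.Adj p.1 p.2 ∧ p.2 ∉ S := by
  simp only [edgeBoundary, mem_filter, mem_product, mem_biUnion]
  exact ⟨fun ⟨⟨h₁, _⟩, h₂⟩ => ⟨h₁, h₂⟩,
    fun ⟨h₁, h₂, h₃⟩ => ⟨⟨h₁, p.1, h₁, (G.mem_neighborFinset _ _).2 h₂⟩, h₂, h₃⟩⟩

theorem sum_sum_eq_zero_of_antisymm {θ : V → V → ℝ} (hθ : ∀ u v, θ u v = -θ v u)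
    (S : Finset V) : ∑ u ∈ S, ∑ v ∈ S, θ u v = 0 := by
  have h : ∑ u ∈ S, ∑ v ∈ S, θ u v = -∑ u ∈ S, ∑ v ∈ S, θ u v := by
    conv_lhs => rw [sum_comm]
    rw [← sum_neg_distrib]
    refine sum_congr rfl fun u _ => ?_
    rw [← sum_neg_distrib]
    exact sum_congr rfl fun v _ => hθ v u
  linarith

theorem IsFlow.sum_divg_eq_sum_edgeBoundary {θ : V → V → ℝ} (hθ : IsFlow G θ)
    (S : Finset V) : ∑ v ∈ S, divg G θ v = ∑ p ∈ edgeBoundary G S, θ p.1 p.2 := by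
  classical
  have inner (v : V) :
      ∑ u ∈ (G.neighborFinset v).filter (· ∈ S), θ v u = ∑ u ∈ S, θ v u := by
    rw [filter_mem_eq_inter, inter_comm]
    refine sum_subset inter_subset_left fun u hu hu' => hθ.2 v u fun hadj => hu' ?_
    exact mem_inter.2 ⟨hu, (G.mem_neighborFinset v u).2 hadj⟩
  rw [sum_finset_product' _ S fun v => (G.neighborFinset v).filter (· ∉ S)]
  · simp only [divg, ← sum_filter_add_sum_filter_not (G.neighborFinset _) (· ∈ S), inner,
      sum_add_distrib, sum_sum_eq_zero_of_antisymm hθ.1, zero_add]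
  · intro p
    simp [mem_edgeBoundary]

end EdgeBoundary

theorem summable_sq_of_energy_ne_top {θ : V → V → ℝ}
    (h : energy (fun _ _ => 1) θ ≠ ⊤) : Summable fun p : V × V => θ p.1 p.2 ^ 2 := by
  have h' : ∑' p : V × V, ENNReal.ofReal (θ p.1 p.2 ^ 2) ≠ ⊤ := by
    intro htop
    simp [energy, htop] at h
  simpa [ENNReal.toReal_ofReal (sq_nonneg _)] using ENNReal.summable_toReal h'

theorem Summable.sum_finset_of_pairwise_disjoint {α : Type*} {f : α → ℝ} (hf : Summable f)
    (hf₀ : ∀ a, 0 ≤ f a) {s : ℕ → Finset α} (hs : Pairwise (Disjoint on s)) :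
    Summable fun n => ∑ a ∈ s n, f a :=
  summable_of_sum_range_le (fun _ => sum_nonneg fun a _ => hf₀ a) fun N => by
    classical
    rw [← sum_biUnion (hs.set_pairwise _)]
    exact hf.sum_le_tsum _ fun a _ => hf₀ a

theorem energy_eq_top_of_disjoint_cuts (θ : V → V → ℝ) (cut : ℕ → Finset (V × V))
    (hcut : Pairwise (Disjoint on cut)) {δ C : ℝ} (hδ : 0 < δ)
    (hflux : ∀ᶠ n in atTop, δ ≤ ∑ p ∈ cut n, θ p.1 p.2)
    (hcard : ∀ᶠ n in atTop, (#(cut n) : ℝ) ≤ C * n) :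
    energy (fun _ _ => 1) θ = ⊤ := by
  by_contra hE
  have hsum : Summable fun n => ∑ p ∈ cut n, θ p.1 p.2 ^ 2 :=
    (summable_sq_of_energy_ne_top hE).sum_finset_of_pairwise_disjoint
      (fun _ => sq_nonneg _) hcut
  refine Real.not_summable_one_div_natCast
    ((hsum.mul_left (C / δ ^ 2)).of_norm_bounded_eventually_nat ?_)
  filter_upwards [hflux, hcard, eventually_gt_atTop 0] with n hflux hcard hn
  have hn' : (0 : ℝ) < n := Nat.cast_pos.2 hn
  have cauchy_schwarz : δ ^ 2 ≤ C * n * ∑ p ∈ cut n, θ p.1 p.2 ^ 2 :=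
    calc δ ^ 2 ≤ (∑ p ∈ cut n, θ p.1 p.2) ^ 2 := pow_le_pow_left₀ hδ.le hflux 2
      _ ≤ #(cut n) * ∑ p ∈ cut n, θ p.1 p.2 ^ 2 := sq_sum_le_card_mul_sum_sq
      _ ≤ C * n * ∑ p ∈ cut n, θ p.1 p.2 ^ 2 :=
        mul_le_mul_of_nonneg_right hcard (sum_nonneg fun _ _ => sq_nonneg _)
  rw [Real.norm_of_nonneg (by positivity), div_le_iff₀ hn', div_mul_eq_mul_div,
    mul_comm, ← mul_div_assoc, le_div_iff₀ (by positivity)]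
  linarith

section Cube

variable {d : ℕ}

noncomputable def cube (d n : ℕ) : Finset (Fin d → ℤ) :=
  Icc (fun _ => -(n : ℤ)) fun _ => (n : ℤ)

theorem mem_cube {n : ℕ} {v : Fin d → ℤ} : v ∈ cube d n ↔ ∀ i, |v i| ≤ n := by
  simp only [cube, mem_Icc, Pi.le_def, abs_le, ← forall_and]

theorem cube_mono : Monotone (cube d) := fun _ _ h _ hv =>
  mem_cube.2 fun i => (mem_cube.1 hv i).trans (by exact_mod_cast h)

theorem card_cube (n : ℕ) : #(cube d n) = (2 * n + 1) ^ d := by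
  simp only [cube, Pi.card_Icc, Int.card_Icc, prod_const, card_univ, Fintype.card_fin]
  congr 1
  omega

theorem exists_mem_cube (v : Fin d → ℤ) : ∃ n, v ∈ cube d n :=
  ⟨univ.sup fun i => (v i).natAbs, mem_cube.2 fun i => by
    rw [Int.abs_eq_natAbs]
    exact_mod_cast le_sup (f := fun i => (v i).natAbs) (mem_univ i)⟩

theorem card_cube_succ_sdiff_le (hd : d ≤ 2) (n : ℕ) :
    #(cube d (n + 1) \ cube d n) ≤ 8 * (n + 1) := by
  rw [card_sdiff_of_subset (cube_mono n.le_succ), card_cube, card_cube, tsub_le_iff_right]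
  interval_cases d <;> ring_nf <;> nlinarith

theorem gridGraph.sub_mem_cube_one {u w : Fin d → ℤ} (h : (gridGraph d).Adj u w) :
    u - w ∈ cube d 1 :=
  mem_cube.2 fun i => by
    simpa using single_le_sum (f := fun j => |u j - w j|) (fun j _ => abs_nonneg _) (mem_univ i)
      |>.trans_eq h

theorem gridGraph.mem_cube_succ_of_adj {n : ℕ} {u w : Fin d → ℤ} (hu : u ∈ cube d n)
    (h : (gridGraph d).Adj u w) : w ∈ cube d (n + 1) :=
  mem_cube.2 fun i => by
    have hui := mem_cube.1 hu i
    have huw := mem_cube.1 (sub_mem_cube_one h) i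
    simp only [Pi.sub_apply, Nat.cast_one] at huw
    have := abs_sub_abs_le_abs_sub (w i) (u i)
    rw [abs_sub_comm] at this
    push_cast
    linarith

theorem pairwise_disjoint_edgeBoundary_cube :
    Pairwise (Disjoint on fun n => edgeBoundary (gridGraph d) (cube d n)) := by
  refine (pairwise_disjoint_on _).2 fun m n hmn => disjoint_left.2 fun p hm hn => ?_
  obtain ⟨hp₁, hadj, -⟩ := mem_edgeBoundary.1 hm
  exact (mem_edgeBoundary.1 hn).2.2 <| cube_mono hmn <| gridGraph.mem_cube_succ_of_adj hp₁ hadj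

/-- An edge leaving the cube is determined by its head, in the next shell, and its
direction, in `cube d 1`. -/
theorem card_edgeBoundary_cube_le (n : ℕ) :
    #(edgeBoundary (gridGraph d) (cube d n)) ≤ #(cube d (n + 1) \ cube d n) * 3 ^ d := by
  classical
  have hsub : edgeBoundary (gridGraph d) (cube d n) ⊆
      ((cube d (n + 1) \ cube d n) ×ˢ cube d 1).image fun q => (q.1 + q.2, q.1) := by
    intro p hp
    obtain ⟨hp₁, hadj, hp₂⟩ := mem_edgeBoundary.1 hp
    refine mem_image.2 ⟨(p.2, p.1 - p.2), ?_, by simp⟩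
    exact mem_product.2 ⟨mem_sdiff.2 ⟨gridGraph.mem_cube_succ_of_adj hp₁ hadj, hp₂⟩,
      gridGraph.sub_mem_cube_one hadj⟩
  calc _ ≤ _ := card_le_card hsub
    _ ≤ _ := card_image_le
    _ = _ := by rw [card_product, card_cube]

theorem card_edgeBoundary_cube_le_of_dim_le_two (hd : d ≤ 2) {n : ℕ} (hn : 1 ≤ n) :
    #(edgeBoundary (gridGraph d) (cube d n)) ≤ 144 * n :=
  calc _ ≤ 8 * (n + 1) * 3 ^ d :=
        (card_edgeBoundary_cube_le n).trans
          (Nat.mul_le_mul_right _ (card_cube_succ_sdiff_le hd n))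
    _ ≤ 8 * (n + 1) * 3 ^ 2 := Nat.mul_le_mul_left _ (Nat.pow_le_pow_right (by norm_num) hd)
    _ ≤ 144 * n := by omega

end Cube

/-- **Recurrence of the 1-grid and 2-grid**: for `d ∈ {1,2}`, every finite-energy flow on
the `d`-grid whose divergence is nonnegative everywhere has divergence `0` everywhere. -/
theorem grid_recurrent_of_dim_le_two (d : ℕ) (hd : d = 1 ∨ d = 2)
    (θ : (Fin d → ℤ) → (Fin d → ℤ) → ℝ)
    (hflow : IsFlow (gridGraph d) θ) (hfin : energy (fun _ _ => 1) θ ≠ ⊤)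
    (hnonneg : ∀ v, 0 ≤ divg (gridGraph d) θ v) :
    ∀ v, divg (gridGraph d) θ v = 0 := by
  intro v
  by_contra hv
  obtain ⟨n₀, hn₀⟩ := exists_mem_cube v
  refine hfin <| energy_eq_top_of_disjoint_cuts (C := 144) θ _
    pairwise_disjoint_edgeBoundary_cube ((hnonneg v).lt_of_ne' hv) ?_ ?_
  · filter_upwards [eventually_ge_atTop n₀] with n hn
    rw [← hflow.sum_divg_eq_sum_edgeBoundary]
    exact single_le_sum (fun w _ => hnonneg w) (cube_mono hn hn₀)
  · filter_upwards [eventually_ge_atTop 1] with n hn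
    exact_mod_cast card_edgeBoundary_cube_le_of_dim_le_two (by omega) hn
end
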